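/- arXiv:2410.12528 — 4 statements merged into one kernel-verified Lean document; each statement's English description precedes it below -/
import Mathlib

section
/- If Γ is a countable nonamenable group, then for any continuous action Γ ↷ X on a compact metrizable space, the naive mean dimension mdim^nv(Γ↷X) is either 0 or +∞. -/
open scoped ENNReal Pointwise
open Filter TensorProduct

/-- Lebesgue covering dimension, valued in `ℕ∞`. -/
noncomputable def covDim (X : Type*) [TopologicalSpace X] : ℕ∞ :=
  sInf {n : ℕ∞ | ∀ U : Set (Set X), (∀ u ∈ U, IsOpen u) → ⋃₀ U = Set.univ → U.Finite →
    ∃ V : Set (Set X), (∀ v ∈ V, IsOpen v) ∧ ⋃₀ V = Set.univ ∧ V.Finite ∧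
      (∀ v ∈ V, ∃ u ∈ U, v ⊆ u) ∧ ∀ x : X, ({v ∈ V | x ∈ v}.ncard : ℕ∞) ≤ n + 1}

/-- `Wdim_ε(X, ρ)`: the minimal covering dimension of a compact metrizable space `P`
admitting an `(ε,ρ)`-embedding `X → P`. -/
noncomputable def Wdim (X : Type*) [TopologicalSpace X] (ρ : X → X → ℝ) (ε : ℝ) : ℕ∞ :=
  sInf {n : ℕ∞ | ∃ (P : Type) (tP : TopologicalSpace P) (f : X → P),
    @CompactSpace P tP ∧ @TopologicalSpace.MetrizableSpace P tP ∧ @Continuous X P _ tP f ∧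
    (∀ x x', f x = f x' → ρ x x' < ε) ∧ n = @covDim P tP}

/-- `ρ_F(x,y) = max_{s ∈ F} ρ(s • x, s • y)`. -/
noncomputable def dynMetric {Γ X : Type*} [SMul Γ X] (ρ : X → X → ℝ) (F : Finset Γ) :
    X → X → ℝ :=
  fun x y => ⨆ s ∈ F, ρ (s • x) (s • y)

/-- `ρ` is a compatible metric on the topological space `X`. -/
def IsCompatibleMetric (X : Type*) [t : TopologicalSpace X] (ρ : X → X → ℝ) : Prop :=
  ∃ m : MetricSpace X, m.toUniformSpace.toTopologicalSpace = t ∧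
    ∀ x y, @dist X m.toPseudoMetricSpace.toDist x y = ρ x y

/-- Naive mean dimension of the action of `Γ` on `X`, computed with the metric `ρ`. -/
noncomputable def mdimNaive (Γ X : Type*) [Group Γ] [TopologicalSpace X] [MulAction Γ X]
    (ρ : X → X → ℝ) : ℝ≥0∞ :=
  ⨆ (ε : ℝ) (_ : 0 < ε), ⨅ (F : Finset Γ) (_ : F.Nonempty),
    (Wdim X (dynMetric ρ F) ε : ℝ≥0∞) / (F.card : ℝ≥0∞)

/-- Amenability of `Γ` (Følner condition). -/
def IsAmenable (Γ : Type*) [Group Γ] [DecidableEq Γ] : Prop :=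
  ∀ K : Finset Γ, K.Nonempty → ∀ δ : ℝ, 0 < δ →
    ∃ F : Finset Γ, F.Nonempty ∧ (((K * F) \ F).card : ℝ) < δ * F.card

/-!
Nonamenability yields a finite `K ⊆ Γ` and `r > 1` with `|KF| ≥ r |F|` for every nonempty
finite `F`. The finitely many maps `k ∈ K` are uniformly continuous, so for every `ε > 0` there
is `ε' > 0` with `ρ_F(x, y) < ε' → ρ_{KF}(x, y) < ε`, whence
`Wdim_ε(X, ρ_{KF}) ≤ Wdim_ε'(X, ρ_F)`. Testing the infimum
`c(ε) = inf_F Wdim_ε(X, ρ_F) / |F|` on `KF` gives `r c(ε) ≤ c(ε')`, and taking suprema over `ε`,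
`r · mdim^nv ≤ mdim^nv`; since `r > 1`, this forces `mdim^nv ∈ {0, ∞}`.
-/

open scoped Finset Uniformity

theorem ENNReal.eq_zero_or_eq_top_of_mul_le_self {r a : ℝ≥0∞} (hr : 1 < r) (h : r * a ≤ a) :
    a = 0 ∨ a = ⊤ := by
  by_contra! ha
  exact hr.not_ge <| (ENNReal.mul_le_mul_iff_left ha.1 ha.2).1 (by rwa [one_mul])

theorem exists_expansion_of_not_isAmenable {Γ : Type*} [Group Γ] [DecidableEq Γ]
    (hΓ : ¬ IsAmenable Γ) :
    ∃ K : Finset Γ, K.Nonempty ∧ ∃ r : ℝ≥0∞, 1 < r ∧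
      ∀ F : Finset Γ, F.Nonempty → r * #F ≤ #(K * F) := by
  simp only [IsAmenable, not_forall, not_exists, not_and, not_lt] at hΓ
  obtain ⟨K, -, δ, hδ, hK⟩ := hΓ
  refine ⟨insert 1 K, Finset.insert_nonempty _ _, ENNReal.ofReal (1 + δ), by simpa using hδ,
    fun F hF => ?_⟩
  have hcard : (1 + δ) * #F ≤ #(insert 1 K * F) := by
    rw [Finset.insert_eq, Finset.union_mul, Finset.singleton_mul, one_smul, Finset.union_comm,
      ← Finset.card_sdiff_add_card]
    push_cast
    linarith [hK F hF]
  calc ENNReal.ofReal (1 + δ) * #F = ENNReal.ofReal ((1 + δ) * #F) := by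
        rw [ENNReal.ofReal_mul (by positivity), ENNReal.ofReal_natCast]
    _ ≤ #(insert 1 K * F) := by
        simpa only [ENNReal.ofReal_natCast] using ENNReal.ofReal_le_ofReal hcard

section DynMetric

variable {Γ X : Type*} [PseudoMetricSpace X]

theorem dynMetric_dist_lt_iff [SMul Γ X] {F : Finset Γ} {x y : X} {ε : ℝ} (hε : 0 < ε) :
    dynMetric dist F x y < ε ↔ ∀ s ∈ F, dist (s • x) (s • y) < ε := by
  rcases F.eq_empty_or_nonempty with rfl | hF
  · simp [dynMetric, hε]
  · obtain ⟨s, hs⟩ := hF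
    exact F.finite_toSet.ciSup_lt_iff (f := fun s : Γ => dist (s • x) (s • y))
      ⟨s, hs, by simp [dist_nonneg]⟩

theorem exists_pos_forall_dist_smul_lt [CompactSpace X] [SMul Γ X] [ContinuousConstSMul Γ X]
    (K : Finset Γ) {ε : ℝ} (hε : 0 < ε) :
    ∃ ε' > 0, ∀ x y : X, dist x y < ε' → ∀ k ∈ K, dist (k • x) (k • y) < ε := by
  have hK : ∀ᶠ p : X × X in 𝓤 X, ∀ k ∈ K, dist (k • p.1) (k • p.2) < ε :=
    K.eventually_all.2 fun k _ =>
      CompactSpace.uniformContinuous_of_continuous (continuous_const_smul k)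
        (Metric.dist_mem_uniformity hε)
  obtain ⟨ε', hε', h⟩ := Metric.mem_uniformity_dist.1 hK
  exact ⟨ε', hε', fun x y hxy => h hxy⟩

theorem Wdim_le_Wdim_of_lt_imp_lt {Y : Type*} [TopologicalSpace Y] {ρ₁ ρ₂ : Y → Y → ℝ}
    {ε₁ ε₂ : ℝ} (h : ∀ x y, ρ₂ x y < ε₂ → ρ₁ x y < ε₁) : Wdim Y ρ₁ ε₁ ≤ Wdim Y ρ₂ ε₂ := by
  refine sInf_le_sInf ?_
  rintro n ⟨P, tP, f, hc, hm, hf, hemb, rfl⟩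
  exact ⟨P, tP, f, hc, hm, hf, fun x x' hfx => h x x' (hemb x x' hfx), rfl⟩

theorem Wdim_dynMetric_mul_le [Monoid Γ] [DecidableEq Γ] [MulAction Γ X] {K F : Finset Γ}
    {ε ε' : ℝ} (hε : 0 < ε) (hε' : 0 < ε')
    (hK : ∀ x y : X, dist x y < ε' → ∀ k ∈ K, dist (k • x) (k • y) < ε) :
    Wdim X (dynMetric dist (K * F)) ε ≤ Wdim X (dynMetric dist F) ε' := by
  refine Wdim_le_Wdim_of_lt_imp_lt fun x y hxy => (dynMetric_dist_lt_iff hε).2 ?_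
  rintro _ hks
  obtain ⟨k, hk, s, hs, rfl⟩ := Finset.mem_mul.1 hks
  rw [mul_smul, mul_smul]
  exact hK _ _ ((dynMetric_dist_lt_iff hε').1 hxy s hs) k hk

end DynMetric

noncomputable def mdimNaiveAt (Γ X : Type*) [Group Γ] [TopologicalSpace X] [MulAction Γ X]
    (ρ : X → X → ℝ) (ε : ℝ) : ℝ≥0∞ :=
  ⨅ (F : Finset Γ) (_ : F.Nonempty), (Wdim X (dynMetric ρ F) ε : ℝ≥0∞) / (F.card : ℝ≥0∞)

section MeanDimension

variable {Γ X : Type*} [Group Γ] [TopologicalSpace X] [MulAction Γ X]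

theorem mul_mdimNaiveAt_le [DecidableEq Γ] {ρ : X → X → ℝ} {K : Finset Γ} (hK : K.Nonempty)
    {r : ℝ≥0∞} (hexp : ∀ F : Finset Γ, F.Nonempty → r * #F ≤ #(K * F)) {ε ε' : ℝ}
    (hW : ∀ F : Finset Γ, Wdim X (dynMetric ρ (K * F)) ε ≤ Wdim X (dynMetric ρ F) ε') :
    r * mdimNaiveAt Γ X ρ ε ≤ mdimNaiveAt Γ X ρ ε' := by
  refine le_iInf₂ fun F hF => ?_
  have hrescale : ∀ W : ℝ≥0∞, r * (W / #(K * F)) ≤ W / #F := fun W => by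
    rw [ENNReal.le_div_iff_mul_le (.inl (by simpa using hF.ne_empty)) (.inl (by simp))]
    calc r * (W / #(K * F)) * #F = W / #(K * F) * (r * #F) := by ring
      _ ≤ W / #(K * F) * #(K * F) := by gcongr; exact hexp F hF
      _ ≤ W := by rw [mul_comm]; exact ENNReal.mul_div_le
  calc r * mdimNaiveAt Γ X ρ ε
      ≤ r * ((Wdim X (dynMetric ρ (K * F)) ε : ℝ≥0∞) / #(K * F)) :=
        mul_le_mul_right (iInf₂_le (K * F) (hK.mul hF)) r
    _ ≤ (Wdim X (dynMetric ρ (K * F)) ε : ℝ≥0∞) / #F := hrescale _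
    _ ≤ (Wdim X (dynMetric ρ F) ε' : ℝ≥0∞) / #F := by gcongr; exact_mod_cast hW F

theorem mul_mdimNaive_le {ρ : X → X → ℝ} {r : ℝ≥0∞}
    (h : ∀ ε > 0, ∃ ε' > 0, r * mdimNaiveAt Γ X ρ ε ≤ mdimNaiveAt Γ X ρ ε') :
    r * mdimNaive Γ X ρ ≤ mdimNaive Γ X ρ := by
  simp only [mdimNaive, ENNReal.mul_iSup]
  refine iSup₂_le fun ε hε => ?_
  obtain ⟨ε', hε', hle⟩ := h ε hε
  exact hle.trans (le_iSup₂ (f := fun ε (_ : 0 < ε) => mdimNaiveAt Γ X ρ ε) ε' hε')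

end MeanDimension

theorem naive_mdim_zero_or_top_of_nonamenable_general
    (Γ X : Type*) [Group Γ] [DecidableEq Γ]
    [TopologicalSpace X] [CompactSpace X]
    [MulAction Γ X] [ContinuousConstSMul Γ X]
    (hΓ : ¬ IsAmenable Γ) (ρ : X → X → ℝ) (hρ : IsCompatibleMetric X ρ) :
    mdimNaive Γ X ρ = 0 ∨ mdimNaive Γ X ρ = ⊤ := by
  obtain ⟨m, rfl, hρ⟩ := hρ
  obtain rfl : ρ = dist := funext₂ fun x y => (hρ x y).symm
  obtain ⟨K, hK, r, hr, hexp⟩ := exists_expansion_of_not_isAmenable hΓ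
  refine ENNReal.eq_zero_or_eq_top_of_mul_le_self hr (mul_mdimNaive_le fun ε hε => ?_)
  obtain ⟨ε', hε', hKε⟩ := exists_pos_forall_dist_smul_lt (X := X) K hε
  exact ⟨ε', hε', mul_mdimNaiveAt_le hK hexp fun F => Wdim_dynMetric_mul_le hε hε' hKε⟩

/-- **Proposition (Liang–Yan, Proposition 3.4).** For a continuous action of a countable
nonamenable group on a compact metrizable space, the naive mean dimension is `0` or `∞`. -/
theorem naive_mdim_zero_or_top_of_nonamenable
    (Γ X : Type*) [Group Γ] [Countable Γ] [DecidableEq Γ]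
    [TopologicalSpace X] [CompactSpace X] [TopologicalSpace.MetrizableSpace X]
    [MulAction Γ X] [ContinuousConstSMul Γ X]
    (hΓ : ¬ IsAmenable Γ) (ρ : X → X → ℝ) (hρ : IsCompatibleMetric X ρ) :
    mdimNaive Γ X ρ = 0 ∨ mdimNaive Γ X ρ = ⊤ :=
  naive_mdim_zero_or_top_of_nonamenable_general Γ X hΓ ρ hρ
end

section
/- Let Γ be any countable group. Fix 0 < τ < 1, 0 ≤ η < 1 and a nonempty finite subset F ⊆ Γ. Suppose a map σ : Γ → Sym(d) admits a subset B ⊆ [d] = {1,…,d} with |B| ≥ (1 − τ/(2(|F|+1)))·d such that for every v ∈ B and all distinct s, t ∈ F ∪ F^{-1}: σ_s(v) ≠ σ_t(v) and σ_{s^{-1}}(v) = (σ_s)^{-1}(v). Then for every subset W ⊆ [d] with |W| ≥ (1 − η/(|F|+1))·d, there exist ℓ ∈ ℕ, subsets F_1, …, F_ℓ ⊆ F and points c_1, …, c_ℓ ∈ W such that: (i) |F_k| ≥ τ|F|/2 for every k = 1, …, ℓ; and (ii) the sets σ(F_1)c_1, …, σ(F_ℓ)c_ℓ (where σ(F_k)c_k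 = {σ_s(c_k) : s ∈ F_k}) are pairwise disjoint and their union has cardinality at least (1 − τ − η)·d. -/
/-! If the pieces chosen so far cover a set `U` with `|U| < (1 - τ - η) d ≤ (1 - τ/2) |W|`, double
counting (each `σ s` is injective) gives a point `c ∈ W` with `σ s c ∈ U` for at most
`(1 - τ/2) |F|` of the `s ∈ F`. The remaining `s` form `F'` with `|F'| ≥ τ |F| / 2` and `σ(F') c`
disjoint from `U`, so the covered set strictly grows and the greedy choice stops within `d` steps. -/

open scoped Pointwise
open Finset

section Averaging

variable {Γ α : Type*} [DecidableEq α] (σ : Γ → Equiv.Perm α) (F : Finset Γ)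

theorem sum_card_filter_perm_mem_le (A U : Finset α) :
    ∑ c ∈ A, #{s ∈ F | σ s c ∈ U} ≤ #F * #U :=
  calc ∑ c ∈ A, #{s ∈ F | σ s c ∈ U}
      = ∑ s ∈ F, #{c ∈ A | σ s c ∈ U} :=
        sum_card_bipartiteAbove_eq_sum_card_bipartiteBelow (r := fun c s => σ s c ∈ U)
    _ ≤ ∑ _s ∈ F, #U := sum_le_sum fun s _ =>
        card_le_card_of_injOn (σ s) (fun _ hc => (mem_filter.1 hc).2) (σ s).injective.injOn
    _ = #F * #U := by rw [sum_const, smul_eq_mul]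

theorem exists_card_filter_perm_mem_le {A U : Finset α} {r : ℝ} (hU : (#U : ℝ) < r * #A) :
    ∃ c ∈ A, (#{s ∈ F | σ s c ∈ U} : ℝ) ≤ r * #F := by
  have hA : A.Nonempty := by
    rw [← card_ne_zero]
    rintro h
    rw [h, Nat.cast_zero, mul_zero] at hU
    exact (#U).cast_nonneg.not_gt hU
  refine exists_le_of_sum_le hA ?_
  have hsum : (∑ c ∈ A, #{s ∈ F | σ s c ∈ U} : ℝ) ≤ #F * #U := by
    exact_mod_cast sum_card_filter_perm_mem_le σ F A U
  rw [sum_const, nsmul_eq_mul]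
  nlinarith [(#F).cast_nonneg (α := ℝ)]

theorem exists_subset_image_disjoint {W U : Finset α} {τ : ℝ}
    (hU : (#U : ℝ) < (1 - τ / 2) * #W) :
    ∃ c ∈ W, ∃ F' ⊆ F, τ * #F / 2 ≤ #F' ∧ Disjoint (F'.image fun s => σ s c) U := by
  obtain ⟨c, hcW, hc⟩ := exists_card_filter_perm_mem_le σ F hU
  refine ⟨c, hcW, {s ∈ F | σ s c ∉ U}, filter_subset _ _, ?_, ?_⟩
  · have hsplit := card_filter_add_card_filter_not (s := F) (fun s => σ s c ∈ U)
    have : (#{s ∈ F | σ s c ∈ U} : ℝ) + #{s ∈ F | σ s c ∉ U} = #F := by exact_mod_cast hsplit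
    linarith
  · simp only [disjoint_left, mem_image, mem_filter]
    rintro _ ⟨s, ⟨-, hs⟩, rfl⟩
    exact hs

end Averaging

theorem Finset.exists_pairwiseDisjoint_le_card_biUnion {ι α : Type*} [Fintype α] [DecidableEq α]
    (S : ι → Finset α) (P : ι → Prop) (target : ℝ)
    (hstep : ∀ U : Finset α, (#U : ℝ) < target →
      ∃ i, P i ∧ (S i).Nonempty ∧ Disjoint (S i) U) :
    ∃ s : Finset ι, (∀ i ∈ s, P i) ∧ (s : Set ι).PairwiseDisjoint S ∧
      target ≤ #(s.biUnion S) := by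
  classical
  suffices key : ∀ n, ∀ s : Finset ι, (∀ i ∈ s, P i) → (s : Set ι).PairwiseDisjoint S →
      Fintype.card α - #(s.biUnion S) = n →
      ∃ s : Finset ι, (∀ i ∈ s, P i) ∧ (s : Set ι).PairwiseDisjoint S ∧
        target ≤ #(s.biUnion S) from
    key _ ∅ (by simp) (by simp) rfl
  intro n
  induction n using Nat.strong_induction_on with
  | _ n ih =>
  intro s hP hdisj hn
  by_cases hdone : target ≤ #(s.biUnion S)
  · exact ⟨s, hP, hdisj, hdone⟩
  obtain ⟨i, hi, hne, hiU⟩ := hstep _ (not_le.1 hdone)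
  have his : i ∉ s := fun his =>
    hne.ne_empty (disjoint_self.1 (hiU.mono_right (subset_biUnion_of_mem S his)))
  have hcard : #((insert i s).biUnion S) = #(S i) + #(s.biUnion S) := by
    rw [biUnion_insert, card_union_of_disjoint hiU]
  have hle := card_le_univ ((insert i s).biUnion S)
  refine ih _ ?_ (insert i s) ?_ ?_ rfl
  · have := hne.card_pos
    omega
  · simpa [forall_mem_insert] using ⟨hi, hP⟩
  · rw [coe_insert, Set.pairwiseDisjoint_insert_of_notMem (mod_cast his)]
    exact ⟨hdisj, fun j hj => hiU.mono_right (subset_biUnion_of_mem S hj)⟩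

theorem Finset.exists_fin_enum_biUnion {ι α : Type*} [DecidableEq α] (s : Finset ι)
    (S : ι → Finset α) (hs : (s : Set ι).PairwiseDisjoint S) :
    ∃ (ℓ : ℕ) (p : Fin ℓ → ι), (∀ k, p k ∈ s) ∧
      (∀ k k', k ≠ k' → Disjoint (S (p k)) (S (p k'))) ∧
      univ.biUnion (fun k => S (p k)) = s.biUnion S := by
  classical
  refine ⟨#s, fun k => s.equivFin.symm k, fun k => (s.equivFin.symm k).2, fun k k' hkk' =>
    hs (s.equivFin.symm k).2 (s.equivFin.symm k').2 ?_, ?_⟩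
  · simpa [Subtype.ext_iff] using hkk'
  · rw [← image_biUnion]
    congr 1
    ext x
    simp only [mem_image, mem_univ, true_and]
    exact ⟨fun ⟨k, hk⟩ => hk ▸ coe_mem _, fun hx => ⟨s.equivFin ⟨x, hx⟩, by simp⟩⟩

theorem assigning_lemma_general
    (Γ : Type*)
    (τ η : ℝ) (hτ0 : 0 < τ) (hτ1 : τ < 1) (hη0 : 0 ≤ η)
    (F : Finset Γ) (hF : F.Nonempty)
    (d : ℕ) (σ : Γ → Equiv.Perm (Fin d))
    (W : Finset (Fin d)) (hW : (1 - η / ((F.card : ℝ) + 1)) * d ≤ (W.card : ℝ)) :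
    ∃ (ℓ : ℕ) (Fk : Fin ℓ → Finset Γ) (c : Fin ℓ → Fin d),
      (∀ k, Fk k ⊆ F) ∧ (∀ k, c k ∈ W) ∧
      (∀ k, τ * (F.card : ℝ) / 2 ≤ ((Fk k).card : ℝ)) ∧
      (∀ k k', k ≠ k' →
        Disjoint ((Fk k).image fun s => σ s (c k)) ((Fk k').image fun s => σ s (c k'))) ∧
      (1 - τ - η) * d ≤
        (((Finset.univ : Finset (Fin ℓ)).biUnion
          (fun k => (Fk k).image fun s => σ s (c k))).card : ℝ) := by
  have hW' : (1 - τ - η) * d ≤ (1 - τ / 2) * #W :=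
    calc (1 - τ - η) * d ≤ (1 - τ / 2) * ((1 - η) * d) := by
          nlinarith [mul_nonneg (mul_nonneg hτ0.le hη0) d.cast_nonneg]
      _ ≤ (1 - τ / 2) * ((1 - η / (#F + 1)) * d) := by
          gcongr
          · linarith
          · exact div_le_self hη0 (by linarith [(#F).cast_nonneg (α := ℝ)])
      _ ≤ (1 - τ / 2) * #W := by gcongr; linarith
  have hstep : ∀ U : Finset (Fin d), (#U : ℝ) < (1 - τ - η) * d →
      ∃ p : Finset Γ × Fin d, (p.1 ⊆ F ∧ p.2 ∈ W ∧ τ * #F / 2 ≤ #p.1) ∧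
        (p.1.image fun g => σ g p.2).Nonempty ∧ Disjoint (p.1.image fun g => σ g p.2) U := by
    intro U hU
    obtain ⟨c, hcW, F', hF'F, hF'card, hF'U⟩ :=
      exists_subset_image_disjoint σ F (hU.trans_le hW')
    have hF'pos : (0 : ℝ) < #F' :=
      (by have := hF.card_pos; positivity : (0 : ℝ) < τ * #F / 2).trans_le hF'card
    exact ⟨(F', c), ⟨hF'F, hcW, hF'card⟩, (card_pos.1 (mod_cast hF'pos)).image _, hF'U⟩
  obtain ⟨s, hgood, hdisj, hcover⟩ := exists_pairwiseDisjoint_le_card_biUnion _ _ _ hstep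
  obtain ⟨ℓ, p, hps, hpdisj, hpU⟩ := s.exists_fin_enum_biUnion _ hdisj
  refine ⟨ℓ, fun k => (p k).1, fun k => (p k).2, fun k => (hgood _ (hps k)).1,
    fun k => (hgood _ (hps k)).2.1, fun k => (hgood _ (hps k)).2.2, hpdisj, ?_⟩
  exact hpU ▸ hcover

/-- **Lemma (Liang–Yan, Lemma 3.10).** The combinatorial "assigning" lemma. -/
theorem assigning_lemma
    (Γ : Type*) [Group Γ] [Countable Γ] [DecidableEq Γ]
    (τ η : ℝ) (hτ0 : 0 < τ) (hτ1 : τ < 1) (hη0 : 0 ≤ η) (hη1 : η < 1)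
    (F : Finset Γ) (hF : F.Nonempty)
    (d : ℕ) (σ : Γ → Equiv.Perm (Fin d)) (B : Finset (Fin d))
    (hBcard : (1 - τ / (2 * ((F.card : ℝ) + 1))) * d ≤ (B.card : ℝ))
    (hBsep : ∀ v ∈ B, ∀ s ∈ F ∪ F⁻¹, ∀ t ∈ F ∪ F⁻¹, s ≠ t → σ s v ≠ σ t v)
    (hBinv : ∀ v ∈ B, ∀ s ∈ F ∪ F⁻¹, σ s⁻¹ v = (σ s)⁻¹ v)
    (W : Finset (Fin d)) (hW : (1 - η / ((F.card : ℝ) + 1)) * d ≤ (W.card : ℝ)) :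
    ∃ (ℓ : ℕ) (Fk : Fin ℓ → Finset Γ) (c : Fin ℓ → Fin d),
      (∀ k, Fk k ⊆ F) ∧ (∀ k, c k ∈ W) ∧
      (∀ k, τ * (F.card : ℝ) / 2 ≤ ((Fk k).card : ℝ)) ∧
      (∀ k k', k ≠ k' →
        Disjoint ((Fk k).image fun s => σ s (c k)) ((Fk k').image fun s => σ s (c k'))) ∧
      (1 - τ - η) * d ≤
        (((Finset.univ : Finset (Fin ℓ)).biUnion
          (fun k => (Fk k).image fun s => σ s (c k))).card : ℝ) :=
  assigning_lemma_general Γ τ η hτ0 hτ1 hη0 F hF d σ W hW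
end

section
/- Let Γ be a countable nonamenable group and M any ZΓ-module. Then the naive mean rank mrk^nv(M) is either 0 or +∞. -/
/-!
Non-amenability yields a finite `K ∋ 1` and a constant `c > 1` with `|K F| ≥ c |F|` for every
nonempty finite `F`. Since `(A^K)^F = A^{K F}`, passing from a finitely generated `A` to the
finitely generated `A^K` multiplies `inf_F rk(A^F) / |F|` by at least `c`. Hence
`c · mrk^nv(M) ≤ mrk^nv(M)`, which in `[0, ∞]` forces `mrk^nv(M) ∈ {0, ∞}`.
-/

open scoped ENNReal Pointwise
open Filter TensorProduct

/-- Rank of an abelian group: `dim_ℚ (ℚ ⊗_ℤ A)`, valued in `ℕ∞`. -/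
noncomputable def addRank (A : Type*) [AddCommGroup A] : ℕ∞ :=
  Cardinal.toENat (Module.rank ℚ (ℚ ⊗[ℤ] A))

/-- `A^F = Σ_{s ∈ F} s⁻¹ A` for a subgroup `A` of a `ℤΓ`-module `M`. -/
noncomputable def subgroupSpan {Γ M : Type*} [Group Γ] [AddCommGroup M] [DistribMulAction Γ M]
    (A : AddSubgroup M) (F : Finset Γ) : AddSubgroup M :=
  ⨆ s ∈ F, s⁻¹ • A

/-- Naive mean rank of the `ℤΓ`-module `M`. -/
noncomputable def mrkNaive (Γ M : Type*) [Group Γ] [AddCommGroup M] [DistribMulAction Γ M] :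
    ℝ≥0∞ :=
  ⨆ (A : AddSubgroup M) (_ : A.FG), ⨅ (F : Finset Γ) (_ : F.Nonempty),
    (addRank (subgroupSpan A F) : ℝ≥0∞) / (F.card : ℝ≥0∞)

namespace AddSubgroup

variable {Γ M : Type*} [Group Γ] [AddCommGroup M] [DistribMulAction Γ M]

lemma FG.smul {A : AddSubgroup M} (hA : A.FG) (a : Γ) : (a • A).FG := by
  rw [AddSubgroup.fg_iff] at hA ⊢
  obtain ⟨S, rfl, hS⟩ := hA
  refine ⟨a • S, ?_, hS.smul_set⟩
  rw [AddSubgroup.pointwise_smul_def]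
  exact (AddMonoidHom.map_closure (DistribMulAction.toAddMonoidEnd Γ M a : M →+ M) S).symm

lemma smul_iSup' (a : Γ) {ι : Sort*} (f : ι → AddSubgroup M) :
    a • (⨆ i, f i) = ⨆ i, a • f i :=
  AddSubgroup.map_iSup _ _

end AddSubgroup

section Span

variable {Γ M : Type*} [Group Γ] [AddCommGroup M] [DistribMulAction Γ M]

lemma AddSubgroup.FG.subgroupSpan {A : AddSubgroup M} (hA : A.FG) (F : Finset Γ) :
    (subgroupSpan A F).FG :=
  AddSubgroup.FG.biSup_finset F _ fun s _ => hA.smul s⁻¹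

lemma subgroupSpan_subgroupSpan [DecidableEq Γ] (A : AddSubgroup M) (K F : Finset Γ) :
    subgroupSpan (subgroupSpan A K) F = subgroupSpan A (K * F) := by
  simp only [subgroupSpan, AddSubgroup.smul_iSup', smul_smul, ← mul_inv_rev]
  apply le_antisymm
  · exact iSup₂_le fun s hs => iSup₂_le fun t ht =>
      le_iSup₂_of_le (t * s) (Finset.mul_mem_mul ht hs) le_rfl
  · refine iSup₂_le fun u hu => ?_
    obtain ⟨t, ht, s, hs, rfl⟩ := Finset.mem_mul.mp hu
    exact le_iSup₂_of_le s hs (le_iSup₂_of_le t ht le_rfl)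

end Span

lemma exists_card_mul_expansion_of_not_isAmenable {Γ : Type*} [Group Γ] [DecidableEq Γ]
    (hΓ : ¬ IsAmenable Γ) :
    ∃ K : Finset Γ, ∃ c : ℝ≥0∞, 1 < c ∧
      ∀ F : Finset Γ, F.Nonempty → c * F.card ≤ (K * F).card := by
  simp only [IsAmenable, not_forall, not_exists, not_and, not_lt] at hΓ
  obtain ⟨K₀, -, δ, hδ, hK₀⟩ := hΓ
  refine ⟨insert 1 K₀, 1 + ENNReal.ofReal δ, ENNReal.lt_add_right ENNReal.one_ne_top
    (ENNReal.ofReal_pos.mpr hδ).ne', fun F hF => ?_⟩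
  -- With `1 ∈ K`, the set `K * F` is `F` together with its boundary `(K * F) \ F`.
  have hsplit := Finset.card_sdiff_add_card_eq_card
    (Finset.subset_mul_right F (Finset.mem_insert_self 1 K₀))
  have hboundary : δ * F.card ≤ ((insert 1 K₀ * F) \ F).card :=
    (hK₀ F hF).trans (mod_cast Finset.card_le_card (Finset.sdiff_subset_sdiff
      (Finset.mul_subset_mul_right (Finset.subset_insert 1 K₀)) le_rfl))
  calc (1 + ENNReal.ofReal δ) * F.card
      = F.card + ENNReal.ofReal (δ * F.card) := by
        rw [ENNReal.ofReal_mul hδ.le, ENNReal.ofReal_natCast]; ring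
    _ ≤ F.card + ((insert 1 K₀ * F) \ F).card := by
        gcongr; exact ENNReal.ofReal_le_of_le_toReal (by simpa using hboundary)
    _ = (insert 1 K₀ * F).card := by rw [← hsplit]; push_cast; ring

section RankDensity

variable (Γ : Type*) {M : Type*} [Group Γ] [AddCommGroup M] [DistribMulAction Γ M]

noncomputable def naiveRankDensity (A : AddSubgroup M) : ℝ≥0∞ :=
  ⨅ (F : Finset Γ) (_ : F.Nonempty), (addRank (subgroupSpan A F) : ℝ≥0∞) / (F.card : ℝ≥0∞)

lemma mrkNaive_eq_iSup_naiveRankDensity :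
    mrkNaive Γ M = ⨆ (A : AddSubgroup M) (_ : A.FG), naiveRankDensity Γ A :=
  rfl

variable {Γ} [DecidableEq Γ]

lemma mul_naiveRankDensity_le_subgroupSpan {K : Finset Γ} {c : ℝ≥0∞}
    (hK : ∀ F : Finset Γ, F.Nonempty → c * F.card ≤ (K * F).card) (A : AddSubgroup M) :
    c * naiveRankDensity Γ A ≤ naiveRankDensity Γ (subgroupSpan A K) := by
  refine le_iInf₂ fun F hF => ?_
  have hKF : naiveRankDensity Γ A * (K * F).card ≤ addRank (subgroupSpan A (K * F)) := by
    rcases (K * F).eq_empty_or_nonempty with hempty | hne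
    · simp [hempty]
    · calc naiveRankDensity Γ A * (K * F).card
          ≤ addRank (subgroupSpan A (K * F)) / (K * F).card * (K * F).card := by
            gcongr; exact iInf₂_le (K * F) hne
        _ ≤ addRank (subgroupSpan A (K * F)) := by rw [mul_comm]; exact ENNReal.mul_div_le
  rw [subgroupSpan_subgroupSpan, ENNReal.le_div_iff_mul_le (.inl (by simpa using hF.ne_empty))
    (.inl (ENNReal.natCast_ne_top _))]
  calc c * naiveRankDensity Γ A * F.card
      = naiveRankDensity Γ A * (c * F.card) := by ring
    _ ≤ naiveRankDensity Γ A * (K * F).card := by gcongr; exact hK F hF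
    _ ≤ addRank (subgroupSpan A (K * F)) := hKF

lemma mul_mrkNaive_le_self {K : Finset Γ} {c : ℝ≥0∞}
    (hK : ∀ F : Finset Γ, F.Nonempty → c * F.card ≤ (K * F).card) :
    c * mrkNaive Γ M ≤ mrkNaive Γ M := by
  simp only [mrkNaive_eq_iSup_naiveRankDensity, ENNReal.mul_iSup]
  exact iSup₂_le fun A hA => le_iSup₂_of_le (subgroupSpan A K) (hA.subgroupSpan K)
    (mul_naiveRankDensity_le_subgroupSpan hK A)

end RankDensity

lemma ENNReal.eq_zero_or_eq_top_of_mul_le_self_s10 {a c : ℝ≥0∞} (hc : 1 < c) (h : c * a ≤ a) :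
    a = 0 ∨ a = ⊤ := by
  by_contra! ha
  have : 1 * a < c * a := ENNReal.mul_lt_mul_left ha.1 ha.2 hc
  exact (one_mul a ▸ this).not_ge h

theorem naive_mrk_zero_or_top_of_nonamenable_general
    (Γ M : Type*) [Group Γ] [DecidableEq Γ]
    [AddCommGroup M] [DistribMulAction Γ M]
    (hΓ : ¬ IsAmenable Γ) :
    mrkNaive Γ M = 0 ∨ mrkNaive Γ M = ⊤ := by
  obtain ⟨K, c, hc, hK⟩ := exists_card_mul_expansion_of_not_isAmenable hΓ
  exact ENNReal.eq_zero_or_eq_top_of_mul_le_self_s10 hc (mul_mrkNaive_le_self hK)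

/-- **Proposition (Liang–Yan, Proposition 4.4).** For a `ℤΓ`-module over a countable
nonamenable group, the naive mean rank is `0` or `∞`. -/
theorem naive_mrk_zero_or_top_of_nonamenable
    (Γ M : Type*) [Group Γ] [Countable Γ] [DecidableEq Γ]
    [AddCommGroup M] [DistribMulAction Γ M]
    (hΓ : ¬ IsAmenable Γ) :
    mrkNaive Γ M = 0 ∨ mrkNaive Γ M = ⊤ :=
  naive_mrk_zero_or_top_of_nonamenable_general Γ M hΓ
end

section
/- Let Γ be a sofic group with sofic approximation Σ, let Γ ↷ X be a continuous action on a compact metrizable space, and let ρ be a compatible metric on X. Suppose that the naive metric mean dimension mdim_M^nv(Γ↷X, ρ) = 0 and, moreover, that liminf_{ε→0} [h_ε^nv(ρ)/|log ε|] · [log N_ε(X,ρ)/|log ε|] = 0. Then the sofic metric mean dimension satisfies mdim_{Σ,M}(Γ↷X, ρ) ≤ 0. -/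
/-
Fix `c > 0` and a small `t` at which `(h_t / |log t|) (log N_t / |log t|)` is small, where
`h_t = h_t^nv(ρ)` and `N_t = N_t(X, ρ)`. Pick `E` with `log N_t(X, ρ_E) ≤ (h_t + κ) |E|`, a
`t`-net for `ρ_E` and a `t`-net for `ρ`. For a good sofic model on `[d]`, a greedy choice of about
`(d / |E|) log (4 / κ)` points `V` has `σ_E V` covering all but `κ d / 2` points. A `4t`-separated
family of approximately equivariant maps `φ` is then coded injectively by the `ρ_E`-net points of
`φ` on `V` and the `ρ`-net points of `φ` on the at most `κ d` points where the covering or the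
equivariance fails. Counting codes gives
`h_Σ^{4t} ≤ log (4 / κ) (h_t + κ) + κ (log N_t + log (1 / κ) + 2)`, and with `L = |log 4t|` the
choice `κ = c L / (4 (log N_t + L))` makes this at most `c L` by the decay hypothesis.
-/

open scoped ENNReal Pointwise
open Filter TensorProduct

/-- Maximal cardinality of an `(ε,ρ)`-separated subset of `X`. -/
noncomputable def sepNum (X : Type*) (ρ : X → X → ℝ) (ε : ℝ) : ℕ∞ :=
  ⨆ (Z : Set X) (_ : ∀ z ∈ Z, ∀ z' ∈ Z, z ≠ z' → ε ≤ ρ z z'), Z.encard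

/-- Logarithm `ℕ∞ → ℝ≥0∞`. -/
noncomputable def enatLog (n : ℕ∞) : ℝ≥0∞ :=
  if n = ⊤ then ⊤ else ENNReal.ofReal (Real.log n.toNat)

/-- The naive `ε`-entropy `h_ε^nv(ρ) = inf_F log N_ε(X, ρ_F) / |F|`. -/
noncomputable def naiveEpsEntropy (Γ X : Type*) [Group Γ] [MulAction Γ X]
    (ρ : X → X → ℝ) (ε : ℝ) : ℝ≥0∞ :=
  ⨅ (F : Finset Γ) (_ : F.Nonempty),
    enatLog (sepNum X (dynMetric ρ F) ε) / (F.card : ℝ≥0∞)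

/-- The naive topological entropy `h^nv = sup_{ε > 0} h_ε^nv(ρ)`. -/
noncomputable def naiveEntropy (Γ X : Type*) [Group Γ] [MulAction Γ X]
    (ρ : X → X → ℝ) : ℝ≥0∞ :=
  ⨆ (ε : ℝ) (_ : 0 < ε), naiveEpsEntropy Γ X ρ ε

/-- The naive metric mean dimension of `Γ ↷ X` with respect to the metric `ρ`. -/
noncomputable def mdimMNaive (Γ X : Type*) [Group Γ] [MulAction Γ X]
    (ρ : X → X → ℝ) : ℝ≥0∞ :=
  Filter.liminf
    (fun ε : ℝ => naiveEpsEntropy Γ X ρ ε / ENNReal.ofReal (Real.log (1 / ε)))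
    (nhdsWithin 0 (Set.Ioi 0))

/-- A sofic approximation of `Γ`. -/
structure SoficApprox (Γ : Type*) [Group Γ] where
  d : ℕ → ℕ
  σ : ∀ i, Γ → Equiv.Perm (Fin (d i))
  approx_mul : ∀ s t : Γ, Filter.Tendsto
    (fun i => (({v | σ i s (σ i t v) = σ i (s * t) v} : Set (Fin (d i))).ncard : ℝ) / d i)
    atTop (nhds 1)
  approx_sep : ∀ s t : Γ, s ≠ t → Filter.Tendsto
    (fun i => (({v | σ i s v ≠ σ i t v} : Set (Fin (d i))).ncard : ℝ) / d i)
    atTop (nhds 1)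
  d_top : Filter.Tendsto d atTop atTop

/-- The pseudometric `ρ_2` on maps `[d] → X`. -/
noncomputable def rho2 {X : Type*} (ρ : X → X → ℝ) {d : ℕ} (φ ψ : Fin d → X) : ℝ :=
  Real.sqrt ((∑ v, ρ (φ v) (ψ v) ^ 2) / d)

/-- The pseudometric `ρ_∞` on maps `[d] → X`. -/
noncomputable def rhoInfty {X : Type*} (ρ : X → X → ℝ) {d : ℕ} (φ ψ : Fin d → X) : ℝ :=
  ⨆ v, ρ (φ v) (ψ v)

/-- The space `Map(ρ, F, δ, σ)` of approximately equivariant maps `[d] → X`. -/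
def soficMap (Γ X : Type*) [SMul Γ X] (ρ : X → X → ℝ) (F : Finset Γ) (δ : ℝ)
    {d : ℕ} (σ : Γ → Equiv.Perm (Fin d)) : Set (Fin d → X) :=
  {φ | ∀ s ∈ F, rho2 ρ (fun v => s • φ v) (fun v => φ (σ s v)) ≤ δ}

open Classical in
/-- The sofic `ε`-entropy `h_Σ^ε(ρ)`, with the convention `-∞` when the model spaces
are eventually empty. -/
noncomputable def soficEpsEntropy (Γ X : Type*) [Group Γ] [MulAction Γ X]
    (S : SoficApprox Γ) (ρ : X → X → ℝ) (ε : ℝ) : EReal :=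
  ⨅ (F : Finset Γ) (_ : F.Nonempty) (δ : ℝ) (_ : 0 < δ),
    Filter.limsup (fun i =>
      if (soficMap Γ X ρ F δ (S.σ i)).Nonempty then
        ((enatLog (sepNum (soficMap Γ X ρ F δ (S.σ i))
            (fun φ ψ => rhoInfty ρ (φ : Fin (S.d i) → X) (ψ : Fin (S.d i) → X)) ε) : ℝ≥0∞) :
              EReal) * (((S.d i : ℝ)⁻¹ : ℝ) : EReal)
      else (⊥ : EReal)) atTop

/-- The sofic metric mean dimension of `Γ ↷ X` with respect to the metric `ρ`. -/
noncomputable def mdimMSofic (Γ X : Type*) [Group Γ] [MulAction Γ X]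
    (S : SoficApprox Γ) (ρ : X → X → ℝ) : EReal :=
  Filter.liminf
    (fun ε : ℝ => soficEpsEntropy Γ X S ρ ε * (((|Real.log ε|)⁻¹ : ℝ) : EReal))
    (nhdsWithin 0 (Set.Ioi 0))

open Finset

section SepNum

variable {Y P : Type*} [PseudoMetricSpace P] {f : Y → P} {r : ℝ}

theorem sepNum_le_card_of_forall_exists_dist_lt (D : Finset P)
    (hD : ∀ y, ∃ p ∈ D, dist (f y) p < r / 2) :
    sepNum Y (fun x y => dist (f x) (f y)) r ≤ #D := by
  choose g hgD hg using hD
  refine iSup₂_le fun Z hZ => ?_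
  have hinj : Set.InjOn g Z := fun z hz z' hz' hzz' => by
    by_contra hne
    have hgz' := hg z'
    rw [← hzz'] at hgz'
    linarith [hZ z hz z' hz' hne, hg z, dist_triangle_right (f z) (f z') (g z)]
  calc Z.encard = (g '' Z).encard := hinj.encard_image.symm
    _ ≤ (D : Set P).encard := Set.encard_le_encard (Set.image_subset_iff.2 fun z _ => hgD z)
    _ = #D := Set.encard_coe_eq_coe_finsetCard D

theorem sepNum_lt_top [TopologicalSpace Y] [CompactSpace Y] (hf : Continuous f) (hr : 0 < r) :
    sepNum Y (fun x y => dist (f x) (f y)) r < ⊤ := by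
  obtain ⟨T, -, hT, hcover⟩ := finite_cover_balls_of_compact (isCompact_range hf) (half_pos hr)
  refine (sepNum_le_card_of_forall_exists_dist_lt hT.toFinset fun y => ?_).trans_lt
    (ENat.natCast_lt_top _)
  obtain ⟨p, hp, hyp⟩ := Set.mem_iUnion₂.1 (hcover (Set.mem_range_self y))
  exact ⟨p, hT.mem_toFinset.2 hp, hyp⟩

/-- A maximal `r`-separated set is an `r`-net; finiteness of `sepNum` provides one. -/
theorem exists_finset_card_le_sepNum_forall_exists_dist_lt
    (h : sepNum Y (fun x y => dist (f x) (f y)) r < ⊤) (hr : 0 < r) :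
    ∃ D : Finset Y, (#D : ℕ∞) ≤ sepNum Y (fun x y => dist (f x) (f y)) r ∧
      ∀ y, ∃ p ∈ D, dist (f y) (f p) < r := by
  rw [sepNum, iSup_subtype'] at h
  have : Nonempty {Z : Set Y // ∀ z ∈ Z, ∀ z' ∈ Z, z ≠ z' → r ≤ dist (f z) (f z')} :=
    ⟨⟨∅, by simp⟩⟩
  obtain ⟨⟨Z, hZ⟩, hmax⟩ := ENat.exists_eq_iSup_of_lt_top h
  have hZfin : Z.Finite := Set.encard_lt_top_iff.1 (hmax.trans_lt h)
  have hsepNum : sepNum Y (fun x y => dist (f x) (f y)) r = Z.encard := by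
    rw [sepNum, iSup_subtype', hmax]
  refine ⟨hZfin.toFinset, ?_, fun y => ?_⟩
  · rw [hsepNum, ← Set.encard_coe_eq_coe_finsetCard, hZfin.coe_toFinset]
  by_contra! hfar
  simp only [Set.Finite.mem_toFinset] at hfar
  have hy : y ∉ Z := fun hy => by linarith [hfar y hy, dist_self (f y)]
  have hsep : ∀ z ∈ insert y Z, ∀ z' ∈ insert y Z, z ≠ z' → r ≤ dist (f z) (f z') := by
    rintro z (rfl | hz) z' (rfl | hz') hne
    exacts [absurd rfl hne, hfar z' hz', dist_comm (f z) (f z') ▸ hfar z hz, hZ z hz z' hz' hne]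
  have hle : (insert y Z).encard ≤ Z.encard := hsepNum ▸ le_iSup₂ (f := fun (Z : Set Y)
    (_ : ∀ z ∈ Z, ∀ z' ∈ Z, z ≠ z' → r ≤ dist (f z) (f z')) => Z.encard) _ hsep
  rw [Set.encard_insert_of_notMem hy] at hle
  exact ((ENat.lt_add_one_iff hZfin.encard_lt_top.ne).2 le_rfl).not_ge hle

end SepNum

theorem enatLog_natCast (n : ℕ) : enatLog n = ENNReal.ofReal (Real.log n) := by
  simp [enatLog]

theorem enatLog_mono : Monotone enatLog := by
  intro a b hab
  induction b using ENat.recTopCoe with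
  | top => simp [enatLog]
  | coe b =>
    obtain ⟨a, rfl⟩ := ENat.ne_top_iff_exists.1 (ne_top_of_le_ne_top (ENat.natCast_ne_top b) hab)
    rw [enatLog_natCast, enatLog_natCast]
    refine ENNReal.ofReal_le_ofReal ?_
    rcases a.eq_zero_or_pos with rfl | ha
    · simpa using Real.log_natCast_nonneg b
    · exact Real.log_le_log (by exact_mod_cast ha) (by exact_mod_cast hab)

theorem enatLog_ne_top {n : ℕ∞} (h : n ≠ ⊤) : enatLog n ≠ ⊤ := by
  simp [enatLog, h]

section GreedyCover

variable {ι α : Type*} [Fintype ι] [Nonempty ι] [DecidableEq α] (C : ι → Finset α) {m : ℕ}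

theorem exists_mul_card_div_le_card_inter {U : Finset α} (hdeg : ∀ w ∈ U, m ≤ #{i | w ∈ C i}) :
    ∃ i, (m * #U / Fintype.card ι : ℝ) ≤ #(U ∩ C i) := by
  have hcount : m * #U ≤ ∑ i, #(U ∩ C i) := by
    have := sum_card_bipartiteAbove_eq_sum_card_bipartiteBelow (s := univ) (t := U)
      (r := fun i w => w ∈ C i)
    simp only [bipartiteAbove, bipartiteBelow, filter_mem_eq_inter] at this
    rw [this, mul_comm]
    exact card_nsmul_le_sum _ _ _ hdeg
  have hn : (Fintype.card ι : ℝ) ≠ 0 := by positivity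
  obtain ⟨i, -, hi⟩ := exists_le_of_sum_le (f := fun _ => (m * #U / Fintype.card ι : ℝ))
    (g := fun i => (#(U ∩ C i) : ℝ)) univ_nonempty (by
      rw [sum_const, card_univ, nsmul_eq_mul, mul_div_cancel₀ _ hn]
      exact_mod_cast hcount)
  exact ⟨i, hi⟩

/-- Greedy covering: each step picks the set meeting the most uncovered points, which removes
a fraction `m / |ι|` of them. -/
theorem exists_card_le_card_sdiff_biUnion_le (W : Finset α) (hdeg : ∀ w ∈ W, m ≤ #{i | w ∈ C i})
    (K : ℕ) : ∃ V : Finset ι, #V ≤ K ∧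
      (#(W \ V.biUnion C) : ℝ) ≤ #W * Real.exp (-(K * m / Fintype.card ι)) := by
  classical
  induction K with
  | zero => exact ⟨∅, by simp⟩
  | succ K ih =>
    obtain ⟨V, hVK, hV⟩ := ih
    set U := W \ V.biUnion C
    obtain ⟨i, hi⟩ := exists_mul_card_div_le_card_inter C (U := U)
      fun w hw => hdeg w (mem_sdiff.1 hw).1
    refine ⟨insert i V, (card_insert_le i V).trans (by omega), ?_⟩
    have hU : W \ (insert i V).biUnion C = U \ C i := by
      rw [biUnion_insert, union_comm, sdiff_sdiff_left, sup_eq_union]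
    have hcard : (#(U \ C i) : ℝ) = #U - #(U ∩ C i) := by
      rw [eq_sub_iff_add_eq]; exact_mod_cast card_sdiff_add_card_inter U (C i)
    have hexp : 1 - (m / Fintype.card ι : ℝ) ≤ Real.exp (-(m / Fintype.card ι)) := by
      linarith [Real.add_one_le_exp (-(m / Fintype.card ι : ℝ))]
    rw [hU, hcard]
    calc (#U : ℝ) - #(U ∩ C i) ≤ #U * (1 - m / Fintype.card ι) := by
          rw [mul_one_sub, ← mul_div_assoc, mul_comm (#U : ℝ)]; linarith
      _ ≤ #U * Real.exp (-(m / Fintype.card ι)) := by gcongr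
      _ ≤ #W * Real.exp (-(K * m / Fintype.card ι)) * Real.exp (-(m / Fintype.card ι)) := by
          gcongr
      _ = #W * Real.exp (-((K + 1 : ℕ) * m / Fintype.card ι)) := by
          rw [mul_assoc, ← Real.exp_add]; push_cast; ring_nf

end GreedyCover

section SparseMaps

variable {ι α : Type*} [Fintype ι] [DecidableEq ι]

def sparseMaps (D : Finset α) (k : ℕ) : Finset (ι → Option α) :=
  {g ∈ Fintype.piFinset fun _ => insertNone D | #{i | (g i).isSome} ≤ k}

/-- Weighting a partial map by `(κ / |D|) ^ (size of its domain)` makes the total weight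
`(1 + κ) ^ |ι|`. -/
theorem card_sparseMaps_le {D : Finset α} (k : ℕ) {κ : ℝ} (hκ : 0 < κ) (hκD : κ ≤ #D) :
    (#(sparseMaps (ι := ι) D k) : ℝ) ≤ (#D / κ) ^ k * (1 + κ) ^ Fintype.card ι := by
  set q : ℝ := κ / #D
  have hq : 0 < q := div_pos hκ (hκ.trans_le hκD)
  have hq1 : q ≤ 1 := (div_le_one (hκ.trans_le hκD)).2 hκD
  have hweight : ∀ g : ι → Option α,
      ∏ i, (if (g i).isSome then q else 1) = q ^ #{i | (g i).isSome} := fun g => by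
    rw [prod_ite, prod_const, prod_const_one, mul_one]
  have htotal : ∑ g ∈ Fintype.piFinset (fun _ : ι => insertNone D), q ^ #{i | (g i).isSome}
      = (1 + κ) ^ Fintype.card ι := by
    rw [sum_congr rfl fun g _ => (hweight g).symm,
      ← prod_univ_sum (fun _ => insertNone D) fun _ o => if o.isSome then q else 1]
    simp [sum_insertNone, q, mul_div_cancel₀ _ (hκ.trans_le hκD).ne', add_comm]
  have hlow : #(sparseMaps (ι := ι) D k) * q ^ k
      ≤ ∑ g ∈ Fintype.piFinset (fun _ : ι => insertNone D), q ^ #{i | (g i).isSome} := by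
    rw [← nsmul_eq_mul]
    refine (card_nsmul_le_sum _ _ _ fun g hg => pow_le_pow_of_le_one hq.le hq1
      (mem_filter.1 hg).2).trans (sum_le_sum_of_subset_of_nonneg (filter_subset _ _)
      fun _ _ _ => by positivity)
  rw [htotal, ← le_div_iff₀ (by positivity)] at hlow
  calc (#(sparseMaps (ι := ι) D k) : ℝ) ≤ (1 + κ) ^ Fintype.card ι / q ^ k := hlow
    _ = (#D / κ) ^ k * (1 + κ) ^ Fintype.card ι := by
      rw [div_eq_mul_inv, ← inv_pow, inv_div, mul_comm]

theorem log_pow_mul_card_sparseMaps_le {N K : ℕ} (hN : 0 < N) {D : Finset α} {κ : ℝ}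
    (hκ : 0 < κ) (hκD : κ ≤ #D) :
    Real.log (N ^ K * #(sparseMaps (ι := ι) D ⌊κ * Fintype.card ι⌋₊)) ≤
      K * Real.log N + κ * Fintype.card ι * (Real.log (#D / κ) + 1) := by
  set n := Fintype.card ι
  have hpos : 0 < #(sparseMaps (ι := ι) D ⌊κ * n⌋₊) :=
    card_pos.2 ⟨fun _ => none, by simp [sparseMaps]⟩
  have hlogD : 0 ≤ Real.log (#D / κ) := Real.log_nonneg ((one_le_div hκ).2 hκD)
  rw [Real.log_mul (by positivity) (by positivity), Real.log_pow]
  gcongr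
  calc Real.log #(sparseMaps (ι := ι) D ⌊κ * n⌋₊)
      ≤ Real.log ((#D / κ) ^ ⌊κ * n⌋₊ * (1 + κ) ^ n) :=
        Real.log_le_log (by exact_mod_cast hpos) (card_sparseMaps_le _ hκ hκD)
    _ = ⌊κ * n⌋₊ * Real.log (#D / κ) + n * Real.log (1 + κ) := by
        rw [Real.log_mul (pow_pos (div_pos (hκ.trans_le hκD) hκ) _).ne' (by positivity),
          Real.log_pow, Real.log_pow]
    _ ≤ κ * n * Real.log (#D / κ) + n * κ := by
        gcongr
        · exact Nat.floor_le (by positivity)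
        · linarith [Real.log_le_sub_one_of_pos (by linarith : 0 < 1 + κ)]
    _ = κ * n * (Real.log (#D / κ) + 1) := by ring

end SparseMaps

theorem mul_log_div_le {x a : ℝ} (hx : 0 < x) (ha : 0 < a) : x * Real.log (a / x) ≤ a := by
  have := Real.log_le_sub_one_of_pos (div_pos ha hx)
  calc x * Real.log (a / x) ≤ x * (a / x - 1) := by gcongr
    _ = a - x := by field_simp
    _ ≤ a := by linarith

theorem toReal_mul_toReal_le_of_div_mul_div_lt {a b : ℝ≥0∞} {L η : ℝ} (hL : 0 < L)
    (h : a / ENNReal.ofReal L * (b / ENNReal.ofReal L) < ENNReal.ofReal η) :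
    a.toReal * b.toReal ≤ η * L ^ 2 := by
  have := ENNReal.toReal_lt_of_lt_ofReal h
  rw [ENNReal.toReal_mul, ENNReal.toReal_div, ENNReal.toReal_div, ENNReal.toReal_ofReal hL.le,
    div_mul_div_comm, div_lt_iff₀ (by positivity)] at this
  nlinarith

theorem le_abs_log_four_mul_of_le_exp {c t : ℝ} (hc : 0 < c) (hc1 : c ≤ 1) (ht : 0 < t)
    (ht' : t ≤ Real.exp (-(24 / c + 3))) :
    24 / c ≤ |Real.log (4 * t)| ∧ |Real.log (4 * t)| ≤ |Real.log t| ∧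
      |Real.log t| ≤ 2 * |Real.log (4 * t)| := by
  have hlogt : Real.log t ≤ -(24 / c + 3) := by
    simpa using Real.log_le_log ht ht'
  have hlog4 : 0 ≤ Real.log 4 ∧ Real.log 4 ≤ 3 := ⟨Real.log_nonneg (by norm_num),
    by linarith [Real.log_le_sub_one_of_pos (by norm_num : (0 : ℝ) < 4)]⟩
  have hc24 : 24 ≤ 24 / c := (le_div_iff₀ hc).2 (by linarith)
  rw [Real.log_mul (by norm_num) ht.ne', abs_of_neg (by linarith), abs_of_neg (by linarith)]
  refine ⟨?_, ?_, ?_⟩ <;> linarith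

/-- With `κ = c L / (4 (M + L))` the terms `κ M` and `log (4 / κ) h` are both `O(c L)`: the
first because `κ ≤ c L / (4 M)`, the second because `log (4 / κ) ≤ log (16 / c) + M / L` and
`h M ≤ (2 θ L)²`. -/
theorem entropy_bound_le {c θ L h M κ : ℝ} (hc : 0 < c) (hc1 : c ≤ 1) (hL : 24 / c ≤ L) (hh : 0 ≤ h)
    (hhM : h ≤ M) (hprod : h * M ≤ (2 * θ * L) ^ 2) (hθ : 0 ≤ θ)
    (hθ₁ : 2 * θ * Real.log (16 / c) ≤ c / 4) (hθ₂ : 4 * θ ^ 2 ≤ c / 4)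
    (hκ : κ = c * L / (4 * (M + L))) :
    Real.log (4 / κ) * (h + κ) + κ * (M + Real.log (1 / κ) + 2) ≤ c * L := by
  have hL0 : 0 < L := lt_of_lt_of_le (by positivity) hL
  have hML : 0 < M + L := by linarith
  have hκ0 : 0 < κ := by rw [hκ]; positivity
  have hκc : κ ≤ c / 4 := by
    rw [hκ, div_le_div_iff₀ (by positivity) (by norm_num)]; nlinarith
  have hκM : κ * M ≤ c * L / 4 := by
    rw [hκ, div_mul_eq_mul_div, div_le_div_iff₀ (by positivity) (by norm_num)]
    nlinarith [mul_pos (mul_pos hc hL0) hL0]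
  have hlog : Real.log (4 / κ) ≤ Real.log (16 / c) + M / L := by
    have h4κ : 4 / κ = 16 / c * ((M + L) / L) := by rw [hκ]; field_simp; ring
    rw [h4κ, Real.log_mul (by positivity) (by positivity)]
    have := Real.log_le_sub_one_of_pos (div_pos hML hL0)
    have hsub : (M + L) / L - 1 = M / L := by field_simp; ring
    linarith
  have hh2 : h ≤ 2 * θ * L :=
    (pow_le_pow_iff_left₀ hh (by positivity) two_ne_zero).1 (by nlinarith)
  have hhML : M / L * h ≤ 4 * θ ^ 2 * L := by
    rw [div_mul_eq_mul_div, div_le_iff₀ hL0]; nlinarith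
  have hlog16 : 0 ≤ Real.log (16 / c) := Real.log_nonneg ((one_le_div hc).2 (by linarith))
  have hhead : Real.log (4 / κ) * h ≤ c / 4 * L + c / 4 * L := by
    calc Real.log (4 / κ) * h ≤ (Real.log (16 / c) + M / L) * h := by gcongr
      _ ≤ Real.log (16 / c) * (2 * θ * L) + 4 * θ ^ 2 * L := by nlinarith
      _ ≤ c / 4 * L + c / 4 * L := by nlinarith
  have hcL : 24 ≤ c * L := by rwa [div_le_iff₀ hc, mul_comm] at hL
  have h4 := mul_log_div_le hκ0 (by norm_num : (0 : ℝ) < 4)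
  have h1 := mul_log_div_le hκ0 one_pos
  calc Real.log (4 / κ) * (h + κ) + κ * (M + Real.log (1 / κ) + 2)
      = Real.log (4 / κ) * h + κ * Real.log (4 / κ) + κ * M + κ * Real.log (1 / κ) + 2 * κ := by
        ring
    _ ≤ c * L := by linarith

section DynMetric

variable {Γ X : Type*} [Group Γ] [MulAction Γ X]

def orbitTuple (F : Finset Γ) (x : X) : F → X := fun s => (s : Γ) • x

theorem continuous_orbitTuple [TopologicalSpace X] [ContinuousConstSMul Γ X] (F : Finset Γ) :
    Continuous (orbitTuple (X := X) F) :=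
  continuous_pi fun _ => continuous_const_smul _

variable [PseudoMetricSpace X]

theorem dynMetric_dist (F : Finset Γ) :
    dynMetric dist F = fun x y : X => dist (orbitTuple F x) (orbitTuple F y) := by
  ext x y
  have hle : ∀ s, ⨆ (_ : s ∈ F), dist (s • x) (s • y) ≤ dist (orbitTuple F x) (orbitTuple F y) :=
    fun s => Real.iSup_le (fun hs => dist_le_pi_dist (orbitTuple F x) (orbitTuple F y) ⟨s, hs⟩)
      dist_nonneg
  unfold dynMetric
  refine le_antisymm (Real.iSup_le hle dist_nonneg) ((dist_pi_le_iff ?_).2 fun s => ?_)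
  · exact Real.iSup_nonneg fun s => Real.iSup_nonneg fun _ => dist_nonneg
  · calc dist (orbitTuple F x s) (orbitTuple F y s)
        = ⨆ (_ : (s : Γ) ∈ F), dist ((s : Γ) • x) ((s : Γ) • y) :=
          (ciSup_pos (f := fun _ => dist ((s : Γ) • x) ((s : Γ) • y)) s.2).symm
      _ ≤ _ := le_ciSup ⟨_, Set.forall_mem_range.2 hle⟩ (s : Γ)

theorem dist_smul_le_dynMetric {F : Finset Γ} {s : Γ} (hs : s ∈ F) (x y : X) :
    dist (s • x) (s • y) ≤ dynMetric dist F x y := by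
  rw [dynMetric_dist]
  exact dist_le_pi_dist (orbitTuple F x) (orbitTuple F y) ⟨s, hs⟩

theorem dynMetric_le_add (F : Finset Γ) (x y z : X) :
    dynMetric dist F x y ≤ dynMetric dist F x z + dynMetric dist F y z := by
  simp only [dynMetric_dist]
  exact dist_triangle_right _ _ _

theorem dynMetric_singleton_one : dynMetric dist ({1} : Finset Γ) = (dist : X → X → ℝ) := by
  have : Nonempty ({1} : Finset Γ) := ⟨⟨1, mem_singleton_self 1⟩⟩
  have horbit : ∀ z : X, orbitTuple ({1} : Finset Γ) z = fun _ => z := fun z =>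
    funext fun s => by rw [orbitTuple, mem_singleton.1 s.2, one_smul]
  simp only [dynMetric_dist, horbit, dist_pi_const]

end DynMetric

section SoficModel

variable {Γ X : Type*} {d : ℕ} (σ : Γ → Equiv.Perm (Fin d)) (E : Finset Γ)

def soficCover (V : Finset (Fin d)) : Finset (Fin d) :=
  V.biUnion fun v => E.image fun s => σ s v

open Classical in
noncomputable def soficInjPoints : Finset (Fin d) :=
  {w | ∀ s ∈ E, ∀ t ∈ E, ∀ v, σ s v = w → σ t v = w → s = t}

theorem card_le_card_filter_mem_image {w : Fin d} (hw : w ∈ soficInjPoints σ E) :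
    #E ≤ #{v | w ∈ E.image fun s => σ s v} := by
  classical
  refine card_le_card_of_injOn (fun s => (σ s).symm w) (fun s hs => ?_) fun s hs t ht hst => ?_
  · simpa using ⟨s, hs, (σ s).apply_symm_apply w⟩
  · have htw := (σ t).apply_symm_apply w
    rw [← show (σ s).symm w = (σ t).symm w from hst] at htw
    exact (mem_filter.1 hw).2 s hs t ht _ ((σ s).apply_symm_apply w) htw

theorem card_compl_soficInjPoints_le {β : ℝ} (hβ : 0 ≤ β)
    (hσ : ∀ s ∈ E, ∀ t ∈ E, s ≠ t → (#{v | σ s v = σ t v} : ℝ) ≤ β * d) :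
    (#(univ \ soficInjPoints σ E) : ℝ) ≤ #E ^ 2 * β * d := by
  classical
  have hsub : univ \ soficInjPoints σ E ⊆ E.offDiag.biUnion fun p =>
      ({v | σ p.1 v = σ p.2 v} : Finset (Fin d)).image (σ p.1) := by
    intro w hw
    simp only [soficInjPoints, Finset.mem_sdiff, mem_filter, mem_univ, true_and,
      not_forall] at hw
    obtain ⟨s, hs, t, ht, v, hsv, htv, hst⟩ := hw
    exact mem_biUnion.2 ⟨(s, t), mem_offDiag.2 ⟨hs, ht, hst⟩,
      mem_image.2 ⟨v, mem_filter.2 ⟨mem_univ v, hsv.trans htv.symm⟩, hsv⟩⟩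
  calc (#(univ \ soficInjPoints σ E) : ℝ)
      ≤ ∑ p ∈ E.offDiag, (#{v | σ p.1 v = σ p.2 v} : ℝ) := by
        exact_mod_cast (card_le_card hsub).trans (card_biUnion_le.trans
          (sum_le_sum fun p _ => card_image_le))
    _ ≤ ∑ _p ∈ E.offDiag, β * d := sum_le_sum fun p hp => by
        obtain ⟨hs, ht, hst⟩ := mem_offDiag.1 hp
        exact hσ _ hs _ ht hst
    _ ≤ #E ^ 2 * β * d := by
        rw [sum_const, nsmul_eq_mul, mul_assoc]
        gcongr
        rw [offDiag_card, sq]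
        exact_mod_cast Nat.sub_le _ _

/-- Each point of `soficInjPoints σ E` lies in `|E|` of the sets `σ_E v`, so the greedy covering
applies there. -/
theorem exists_card_compl_soficCover_le (hd : 0 < d) {β : ℝ} (hβ : 0 ≤ β)
    (hσ : ∀ s ∈ E, ∀ t ∈ E, s ≠ t → (#{v | σ s v = σ t v} : ℝ) ≤ β * d) (K : ℕ) :
    ∃ V, #V ≤ K ∧
      (#(univ \ soficCover σ E V) : ℝ) ≤ (#E ^ 2 * β + Real.exp (-(K * #E / d))) * d := by
  classical
  have : Nonempty (Fin d) := ⟨⟨0, hd⟩⟩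
  set W := soficInjPoints σ E
  obtain ⟨V, hVK, hV⟩ := exists_card_le_card_sdiff_biUnion_le (fun v => E.image fun s => σ s v)
    W (fun w hw => card_le_card_filter_mem_image σ E hw) K
  refine ⟨V, hVK, ?_⟩
  have hW : (#W : ℝ) ≤ d := by exact_mod_cast (card_le_univ W).trans (by simp)
  rw [Fintype.card_fin] at hV
  calc (#(univ \ soficCover σ E V) : ℝ) ≤ #(univ \ W) + #(W \ soficCover σ E V) := by
        exact_mod_cast (card_le_card fun w hw => by
          by_cases hwW : w ∈ W <;> simp_all).trans (card_union_le _ _)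
    _ ≤ #E ^ 2 * β * d + d * Real.exp (-(K * #E / d)) :=
        add_le_add (card_compl_soficInjPoints_le σ E hβ hσ) (hV.trans (by gcongr))
    _ = (#E ^ 2 * β + Real.exp (-(K * #E / d))) * d := by ring

theorem card_lt_mul_sq_le_of_rho2_le {ρ : X → X → ℝ} {φ ψ : Fin d → X} {δ a : ℝ} (ha : 0 ≤ a)
    (h : rho2 ρ φ ψ ≤ δ) : (#{v | a < ρ (φ v) (ψ v)} : ℝ) * a ^ 2 ≤ δ ^ 2 * d := by
  rcases d.eq_zero_or_pos with rfl | hd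
  · simp
  have hsum : ∑ v, ρ (φ v) (ψ v) ^ 2 ≤ δ ^ 2 * d := by
    rw [← div_le_iff₀ (by positivity)]
    exact (Real.sqrt_le_iff.1 h).2
  refine le_trans ?_ hsum
  rw [← nsmul_eq_mul]
  refine (card_nsmul_le_sum _ _ _ fun v hv => ?_).trans
    (sum_le_sum_of_subset_of_nonneg (subset_univ _) fun _ _ _ => sq_nonneg _)
  exact pow_le_pow_left₀ ha (mem_filter.1 hv).2.le 2

variable [Group Γ] [MulAction Γ X] [PseudoMetricSpace X]

noncomputable def soficBadSet (V : Finset (Fin d)) (a : ℝ) (φ : Fin d → X) : Finset (Fin d) :=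
  (univ \ soficCover σ E V) ∪
    E.biUnion fun s => ({v | a < dist (s • φ v) (φ (σ s v))} : Finset (Fin d)).image (σ s)

theorem card_soficBadSet_le {δ a : ℝ} (ha : 0 < a) (V : Finset (Fin d)) {φ : Fin d → X}
    (hφ : φ ∈ soficMap Γ X dist E δ σ) :
    (#(soficBadSet σ E V a φ) : ℝ) ≤ #(univ \ soficCover σ E V) + #E * (δ / a) ^ 2 * d := by
  have hfar : ∀ s ∈ E, (#({v | a < dist (s • φ v) (φ (σ s v))} : Finset (Fin d)) : ℝ)
      ≤ (δ / a) ^ 2 * d := fun s hs => by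
    rw [div_pow, div_mul_eq_mul_div, le_div_iff₀ (by positivity)]
    exact card_lt_mul_sq_le_of_rho2_le ha.le (hφ s hs)
  calc (#(soficBadSet σ E V a φ) : ℝ)
      ≤ #(univ \ soficCover σ E V) +
          ∑ s ∈ E, (#({v | a < dist (s • φ v) (φ (σ s v))} : Finset (Fin d)) : ℝ) := by
        exact_mod_cast (card_union_le _ _).trans (add_le_add le_rfl (card_biUnion_le.trans
          (sum_le_sum fun s _ => card_image_le)))
    _ ≤ #(univ \ soficCover σ E V) + #E * (δ / a) ^ 2 * d := by
        rw [mul_assoc, ← nsmul_eq_mul, ← sum_const]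
        exact add_le_add le_rfl (sum_le_sum hfar)

/-- Off the bad set, `w = σ_s v` with `v ∈ V`, `s ∈ E`, and both `φ w`, `ψ w` are `a`-close
to `s • φ v`, `s • ψ v`. -/
theorem dist_le_of_soficBadSet_eq {V : Finset (Fin d)} {a b : ℝ} {φ ψ : Fin d → X}
    (hbad : soficBadSet σ E V a φ = soficBadSet σ E V a ψ)
    (hV : ∀ v ∈ V, dynMetric dist E (φ v) (ψ v) ≤ b) {w : Fin d}
    (hw : w ∉ soficBadSet σ E V a φ) : dist (φ w) (ψ w) ≤ 2 * a + b := by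
  have hwψ := hbad ▸ hw
  simp only [soficBadSet, mem_union, Finset.mem_sdiff, mem_univ, true_and, not_or, not_not,
    mem_biUnion, mem_image, mem_filter, not_exists, not_and] at hw hwψ
  obtain ⟨v, hv, s, hs, rfl⟩ : ∃ v ∈ V, ∃ s ∈ E, σ s v = w := by
    simpa [soficCover] using hw.1
  have hφ : dist (s • φ v) (φ (σ s v)) ≤ a := not_lt.1 fun h => hw.2 s hs v h rfl
  have hψ : dist (s • ψ v) (ψ (σ s v)) ≤ a := not_lt.1 fun h => hwψ.2 s hs v h rfl
  calc dist (φ (σ s v)) (ψ (σ s v))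
      ≤ dist (φ (σ s v)) (s • φ v) + dist (s • φ v) (s • ψ v) + dist (s • ψ v) (ψ (σ s v)) :=
        dist_triangle4 _ _ _ _
    _ ≤ a + b + a := by
        rw [dist_comm] at hφ
        gcongr
        exact (dist_smul_le_dynMetric hs _ _).trans (hV v hv)
    _ = 2 * a + b := by ring

theorem rhoInfty_le_of_soficBadSet_eq {V : Finset (Fin d)} {ε : ℝ} (hε : 0 < ε) {nE n0 : X → X}
    (hnE : ∀ x, dynMetric dist E x (nE x) < ε / 4) (hn0 : ∀ x, dist x (n0 x) < ε / 4)
    {φ ψ : Fin d → X} (hbad : soficBadSet σ E V (ε / 8) φ = soficBadSet σ E V (ε / 8) ψ)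
    (hV : ∀ v ∈ V, nE (φ v) = nE (ψ v))
    (hB : ∀ w ∈ soficBadSet σ E V (ε / 8) φ, n0 (φ w) = n0 (ψ w)) :
    rhoInfty dist φ ψ ≤ 3 * ε / 4 := by
  refine Real.iSup_le (fun w => ?_) (by positivity)
  by_cases hw : w ∈ soficBadSet σ E V (ε / 8) φ
  · have := dist_triangle_right (φ w) (ψ w) (n0 (ψ w))
    have hφw := hn0 (φ w)
    rw [hB w hw] at hφw
    linarith [hn0 (ψ w)]
  · have hVclose : ∀ v ∈ V, dynMetric dist E (φ v) (ψ v) ≤ ε / 2 := fun v hv => by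
      have := dynMetric_le_add E (φ v) (ψ v) (nE (ψ v))
      have hφv := hnE (φ v)
      rw [hV v hv] at hφv
      linarith [hnE (ψ v)]
    linarith [dist_le_of_soficBadSet_eq σ E hbad hVclose hw]

/-- An `ε`-separated family in `Map(ρ, E, δ, σ)` is coded injectively by `ρ_E`-net points
on `V` together with `ρ`-net points on the bad set. -/
theorem sepNum_soficMap_le {δ ε r : ℝ} (hε : 0 < ε) {DE D0 : Finset X}
    (hDE : ∀ x, ∃ p ∈ DE, dynMetric dist E x p < ε / 4) (hD0 : ∀ x, ∃ p ∈ D0, dist x p < ε / 4)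
    (V : Finset (Fin d))
    (hr : (#(univ \ soficCover σ E V) : ℝ) + #E * (8 * δ / ε) ^ 2 * d ≤ r) :
    sepNum (soficMap Γ X dist E δ σ) (fun φ ψ => rhoInfty dist (φ : Fin d → X) ψ) ε ≤
      (#DE ^ #V * #(sparseMaps (ι := Fin d) D0 ⌊r⌋₊) : ℕ) := by
  classical
  choose nE hnE hnEd using hDE
  choose n0 hn0 hn0d using hD0
  set bad : (Fin d → X) → Finset (Fin d) := soficBadSet σ E V (ε / 8)
  let code : soficMap Γ X dist E δ σ → (V → X) × (Fin d → Option X) := fun φ =>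
    (fun v => nE (φ.1 v), fun w => if w ∈ bad φ.1 then some (n0 (φ.1 w)) else none)
  have hmaps : ∀ φ, code φ ∈ Fintype.piFinset (fun _ : V => DE) ×ˢ sparseMaps D0 ⌊r⌋₊ := by
    intro φ
    have hsupp : #{w | ((code φ).2 w).isSome} = #(bad φ.1) := by
      congr 1; ext w; by_cases hw : w ∈ bad φ.1 <;> simp [code, hw]
    simp only [mem_product, Fintype.mem_piFinset, sparseMaps, mem_filter, hsupp]
    refine ⟨fun v => hnE _, fun w => ?_, Nat.le_floor ?_⟩
    · simp only [code]
      split_ifs <;> simp [hn0]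
    · refine (card_soficBadSet_le σ E (by positivity) V φ.2).trans (le_of_eq_of_le ?_ hr)
      rw [div_div_eq_mul_div, mul_comm δ 8]
  have hinj : ∀ φ ψ, code φ = code ψ → rhoInfty dist φ.1 ψ.1 < ε := fun φ ψ h => by
    obtain ⟨hV, hB⟩ := Prod.ext_iff.1 h
    have hB' : ∀ w, (if w ∈ bad φ.1 then some (n0 (φ.1 w)) else none)
        = if w ∈ bad ψ.1 then some (n0 (ψ.1 w)) else none := congrFun hB
    have hbad : bad φ.1 = bad ψ.1 := by
      ext w; have := hB' w; split_ifs at this <;> simp_all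
    refine (rhoInfty_le_of_soficBadSet_eq σ E hε hnEd hn0d hbad (fun v hv => congrFun hV ⟨v, hv⟩)
      fun w hw => ?_).trans_lt (by linarith)
    have hwφ : w ∈ bad φ.1 := hw
    have hwψ : w ∈ bad ψ.1 := hbad ▸ hwφ
    simpa [hwφ, hwψ] using hB' w
  refine iSup₂_le fun Z hZ => ?_
  have hZinj : Set.InjOn code Z := fun φ hφ ψ hψ h => by
    by_contra hne
    exact (hZ φ hφ ψ hψ hne).not_gt (hinj φ ψ h)
  refine (Set.encard_le_encard_of_injOn (fun φ _ => mem_coe.2 (hmaps φ)) hZinj).trans_eq ?_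
  rw [Set.encard_coe_eq_coe_finsetCard, card_product, Fintype.card_piFinset, prod_const,
    card_univ, Fintype.card_coe]

theorem sepNum_soficMap_le_of_card_eq_le (hE : E.Nonempty) (hd : 0 < d) {ε κ : ℝ} (hε : 0 < ε)
    (hκ : 0 < κ) (hκ1 : κ ≤ 1) {DE D0 : Finset X} (hDEne : DE.Nonempty)
    (hDE : ∀ x, ∃ p ∈ DE, dynMetric dist E x p < ε / 4) (hD0 : ∀ x, ∃ p ∈ D0, dist x p < ε / 4)
    (hσ : ∀ s ∈ E, ∀ t ∈ E, s ≠ t → (#{v | σ s v = σ t v} : ℝ) ≤ κ / (4 * #E ^ 2) * d) :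
    sepNum (soficMap Γ X dist E (ε * κ / (16 * #E)) σ)
        (fun φ ψ => rhoInfty dist (φ : Fin d → X) ψ) ε ≤
      (#DE ^ ⌈d / #E * Real.log (4 / κ)⌉₊ * #(sparseMaps (ι := Fin d) D0 ⌊κ * d⌋₊) : ℕ) := by
  have hm : (0 : ℝ) < #E := by exact_mod_cast hE.card_pos
  obtain ⟨V, hVK, hV⟩ := exists_card_compl_soficCover_le σ E hd (by positivity) hσ
    ⌈d / #E * Real.log (4 / κ)⌉₊
  have hexp : Real.exp (-(⌈d / #E * Real.log (4 / κ)⌉₊ * #E / d)) ≤ κ / 4 := by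
    calc Real.exp (-(⌈d / #E * Real.log (4 / κ)⌉₊ * #E / d))
        ≤ Real.exp (-(d / #E * Real.log (4 / κ) * #E / d)) := by gcongr; exact Nat.le_ceil _
      _ = κ / 4 := by
        rw [show (d : ℝ) / #E * Real.log (4 / κ) * #E / d = Real.log (4 / κ) by field_simp,
          Real.exp_neg, Real.exp_log (by positivity), inv_div]
  have hδ : (#E : ℝ) * (8 * (ε * κ / (16 * #E)) / ε) ^ 2 ≤ κ / 4 := by
    rw [show (#E : ℝ) * (8 * (ε * κ / (16 * #E)) / ε) ^ 2 = κ / 4 * (κ / #E) by field_simp; ring]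
    exact mul_le_of_le_one_right (by positivity)
      ((div_le_one hm).2 (hκ1.trans (by exact_mod_cast hE.card_pos)))
  refine (sepNum_soficMap_le σ E hε hDE hD0 V (r := κ * d) ?_).trans ?_
  · calc (#(univ \ soficCover σ E V) : ℝ) + #E * (8 * (ε * κ / (16 * #E)) / ε) ^ 2 * d
        ≤ (#E ^ 2 * (κ / (4 * #E ^ 2)) + κ / 4) * d + κ / 4 * d := by
          gcongr
          exact hV.trans (by gcongr)
      _ ≤ κ * d := by
        rw [show (#E : ℝ) ^ 2 * (κ / (4 * #E ^ 2)) = κ / 4 by field_simp]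
        nlinarith [(Nat.cast_nonneg d : (0 : ℝ) ≤ d)]
  · exact_mod_cast Nat.mul_le_mul_right _ (Nat.pow_le_pow_right hDEne.card_pos hVK)

theorem enatLog_sepNum_soficMap_le (hE : E.Nonempty) (hd : 0 < d) {ε κ : ℝ} (hε : 0 < ε)
    (hκ : 0 < κ) (hκ1 : κ ≤ 1) {DE D0 : Finset X} (hDEne : DE.Nonempty) (hD0κ : κ ≤ #D0)
    (hDE : ∀ x, ∃ p ∈ DE, dynMetric dist E x p < ε / 4) (hD0 : ∀ x, ∃ p ∈ D0, dist x p < ε / 4)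
    (hσ : ∀ s ∈ E, ∀ t ∈ E, s ≠ t → (#{v | σ s v = σ t v} : ℝ) ≤ κ / (4 * #E ^ 2) * d)
    (hlogDE : Real.log #DE ≤ κ * d) :
    enatLog (sepNum (soficMap Γ X dist E (ε * κ / (16 * #E)) σ)
        (fun φ ψ => rhoInfty dist (φ : Fin d → X) ψ) ε) ≤
      ENNReal.ofReal
        ((Real.log (4 / κ) * (Real.log #DE / #E) + κ * (Real.log (#D0 / κ) + 2)) * d) := by
  have hlog4 : 0 ≤ Real.log (4 / κ) := Real.log_nonneg ((one_le_div hκ).2 (by linarith))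
  refine (enatLog_mono (sepNum_soficMap_le_of_card_eq_le σ E hE hd hε hκ hκ1 hDEne hDE hD0
    hσ)).trans ?_
  rw [enatLog_natCast]
  refine ENNReal.ofReal_le_ofReal ?_
  have hlog := log_pow_mul_card_sparseMaps_le (ι := Fin d) (K := ⌈d / #E * Real.log (4 / κ)⌉₊)
    hDEne.card_pos hκ hD0κ
  rw [Fintype.card_fin] at hlog
  calc Real.log ((#DE ^ ⌈d / #E * Real.log (4 / κ)⌉₊ *
        #(sparseMaps (ι := Fin d) D0 ⌊κ * d⌋₊) : ℕ) : ℝ)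
      ≤ ⌈d / #E * Real.log (4 / κ)⌉₊ * Real.log #DE + κ * d * (Real.log (#D0 / κ) + 1) := by
        exact_mod_cast hlog
    _ ≤ (d / #E * Real.log (4 / κ) + 1) * Real.log #DE + κ * d * (Real.log (#D0 / κ) + 1) := by
        gcongr
        exact (Nat.ceil_lt_add_one (by positivity)).le
    _ = d * (Real.log (4 / κ) * (Real.log #DE / #E)) + Real.log #DE +
          κ * d * (Real.log (#D0 / κ) + 1) := by
        field_simp
    _ ≤ _ := by linarith

end SoficModel

section SoficEntropy

variable {Γ X : Type*} [Group Γ] [MulAction Γ X]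

theorem SoficApprox.eventually_card_eq_le (S : SoficApprox Γ) {s t : Γ} (hst : s ≠ t) {β : ℝ}
    (hβ : 0 < β) : ∀ᶠ i in atTop, (#{v | S.σ i s v = S.σ i t v} : ℝ) ≤ β * S.d i := by
  filter_upwards [(S.approx_sep s t hst).eventually (lt_mem_nhds (by linarith : 1 - β < 1))]
    with i hi
  have hsplit : (#{v | S.σ i s v = S.σ i t v} : ℝ) + ({v | S.σ i s v ≠ S.σ i t v} : Set _).ncard
      = S.d i := by
    rw [Set.ncard_eq_toFinset_card', Set.toFinset_ofPred]
    exact_mod_cast (card_filter_add_card_filter_not _).trans (by simp)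
  have hne : (1 - β) * S.d i ≤ ({v | S.σ i s v ≠ S.σ i t v} : Set (Fin (S.d i))).ncard := by
    rcases (S.d i).eq_zero_or_pos with hd | hd
    · simp [hd]
    · exact ((lt_div_iff₀ (by exact_mod_cast hd)).1 hi).le
  linarith

theorem SoficApprox.eventually_forall_card_eq_le (S : SoficApprox Γ) (E : Finset Γ) {β : ℝ}
    (hβ : 0 < β) : ∀ᶠ i in atTop,
      ∀ s ∈ E, ∀ t ∈ E, s ≠ t → (#{v | S.σ i s v = S.σ i t v} : ℝ) ≤ β * S.d i := by
  simp only [eventually_all_finset]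
  intro s _ t _
  by_cases hst : s = t
  · exact Eventually.of_forall fun _ h => absurd hst h
  · exact (S.eventually_card_eq_le hst hβ).mono fun _ h _ => h

theorem soficEpsEntropy_le_of_eventually (S : SoficApprox Γ) {ρ : X → X → ℝ} {F : Finset Γ}
    (hF : F.Nonempty) {δ : ℝ} (hδ : 0 < δ) {ε C : ℝ} (hC : 0 ≤ C)
    (h : ∀ᶠ i in atTop, (soficMap Γ X ρ F δ (S.σ i)).Nonempty →
      enatLog (sepNum (soficMap Γ X ρ F δ (S.σ i))
        (fun φ ψ => rhoInfty ρ (φ : Fin (S.d i) → X) ψ) ε) ≤ ENNReal.ofReal (C * S.d i)) :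
    soficEpsEntropy Γ X S ρ ε ≤ C := by
  refine (iInf₂_le F hF).trans ((iInf₂_le δ hδ).trans (limsup_le_of_le (by isBoundedDefault) ?_))
  filter_upwards [h, S.d_top.eventually_gt_atTop 0] with i hi hd
  split_ifs with hne
  · have hd' : (0 : ℝ) < S.d i := by exact_mod_cast hd
    calc _ ≤ ((ENNReal.ofReal (C * S.d i) : ℝ≥0∞) : EReal) * ((S.d i : ℝ)⁻¹ : ℝ) := by
          gcongr
          exact_mod_cast hi hne
      _ = C := by
          rw [EReal.coe_ennreal_ofReal, max_eq_left (by positivity), ← EReal.coe_mul,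
            mul_inv_cancel_right₀ hd'.ne']
  · exact bot_le

theorem soficEpsEntropy_le_of_nets [PseudoMetricSpace X] (S : SoficApprox Γ) {E : Finset Γ}
    (hE : E.Nonempty) {ε κ : ℝ} (hε : 0 < ε) (hκ : 0 < κ) (hκ1 : κ ≤ 1) {DE D0 : Finset X}
    (hDE : ∀ x, ∃ p ∈ DE, dynMetric dist E x p < ε / 4) (hD0 : ∀ x, ∃ p ∈ D0, dist x p < ε / 4) :
    soficEpsEntropy Γ X S dist ε ≤
      (Real.log (4 / κ) * (Real.log #DE / #E) + κ * (Real.log (#D0 / κ) + 2) : ℝ) := by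
  have hlogD0 : 0 ≤ Real.log (#D0 / κ) := by
    rcases D0.eq_empty_or_nonempty with rfl | hD0ne
    · simp
    · exact Real.log_nonneg ((one_le_div hκ).2 (hκ1.trans (by exact_mod_cast hD0ne.card_pos)))
  have hlog4 : 0 ≤ Real.log (4 / κ) := Real.log_nonneg ((one_le_div hκ).2 (by linarith))
  refine soficEpsEntropy_le_of_eventually S hE (δ := ε * κ / (16 * #E)) (by positivity)
    (by positivity) ?_
  filter_upwards [S.eventually_forall_card_eq_le E (β := κ / (4 * #E ^ 2)) (by positivity),
    S.d_top.eventually_ge_atTop ⌈Real.log #DE / κ⌉₊, S.d_top.eventually_gt_atTop 0]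
    with i hσ hdDE hd hne
  obtain ⟨φ, -⟩ := hne
  obtain ⟨pE, hpE, -⟩ := hDE (φ ⟨0, hd⟩)
  obtain ⟨p0, hp0, -⟩ := hD0 (φ ⟨0, hd⟩)
  have hlogDE : Real.log #DE ≤ κ * S.d i := by
    rw [← div_le_iff₀' hκ]; exact (Nat.le_ceil _).trans (by exact_mod_cast hdDE)
  exact enatLog_sepNum_soficMap_le (S.σ i) E hE hd hε hκ hκ1 ⟨pE, hpE⟩
    (hκ1.trans (by exact_mod_cast card_pos.2 ⟨p0, hp0⟩)) hDE hD0 hσ hlogDE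

end SoficEntropy

section NaiveEntropy

variable {Γ X : Type*} [Group Γ] [MulAction Γ X] [PseudoMetricSpace X]

theorem naiveEpsEntropy_le_enatLog_sepNum (t : ℝ) :
    naiveEpsEntropy Γ X dist t ≤ enatLog (sepNum X dist t) := by
  refine (iInf₂_le {1} ⟨1, mem_singleton_self 1⟩).trans ?_
  rw [dynMetric_singleton_one, card_singleton, Nat.cast_one, div_one]

variable [CompactSpace X]

theorem enatLog_sepNum_ne_top {t : ℝ} (ht : 0 < t) : enatLog (sepNum X dist t) ≠ ⊤ :=
  enatLog_ne_top (sepNum_lt_top (f := (id : X → X)) continuous_id ht).ne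

theorem exists_finset_log_card_le {t : ℝ} (ht : 0 < t) :
    ∃ D : Finset X, (∀ x, ∃ p ∈ D, dist x p < t) ∧
      Real.log #D ≤ (enatLog (sepNum X dist t)).toReal := by
  obtain ⟨D, hDcard, hD⟩ := exists_finset_card_le_sepNum_forall_exists_dist_lt
    (sepNum_lt_top (f := (id : X → X)) continuous_id ht) ht
  refine ⟨D, hD, ?_⟩
  have := ENNReal.toReal_mono (enatLog_sepNum_ne_top ht) (enatLog_mono hDcard)
  rwa [enatLog_natCast, ENNReal.toReal_ofReal (Real.log_natCast_nonneg _)] at this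

variable [ContinuousConstSMul Γ X]

theorem exists_finset_log_card_div_le {t κ : ℝ} (ht : 0 < t) (hκ : 0 < κ) :
    ∃ E : Finset Γ, E.Nonempty ∧ ∃ D : Finset X, (∀ x, ∃ p ∈ D, dynMetric dist E x p < t) ∧
      Real.log #D / #E ≤ (naiveEpsEntropy Γ X dist t).toReal + κ := by
  have hfin : naiveEpsEntropy Γ X dist t ≠ ⊤ :=
    ne_top_of_le_ne_top (enatLog_sepNum_ne_top ht) (naiveEpsEntropy_le_enatLog_sepNum t)
  have hlt := ENNReal.lt_add_right hfin (ENNReal.ofReal_pos.2 hκ).ne'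
  nth_rewrite 1 [naiveEpsEntropy] at hlt
  obtain ⟨E, hlt⟩ := iInf_lt_iff.1 hlt
  obtain ⟨hE, hlt⟩ := iInf_lt_iff.1 hlt
  have hsep := sepNum_lt_top (continuous_orbitTuple (X := X) E) ht
  obtain ⟨D, hDcard, hD⟩ := exists_finset_card_le_sepNum_forall_exists_dist_lt hsep ht
  rw [← dynMetric_dist] at hDcard
  refine ⟨E, hE, D, fun x => by simpa only [dynMetric_dist] using hD x, ?_⟩
  have hm : (0 : ℝ) < #E := by exact_mod_cast hE.card_pos
  have hlog :
      ENNReal.ofReal (Real.log #D) < (naiveEpsEntropy Γ X dist t + ENNReal.ofReal κ) * #E := by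
    rw [← enatLog_natCast, ← ENNReal.div_lt_iff (by simp [hE.ne_empty]) (by simp)]
    exact (ENNReal.div_le_div_right (enatLog_mono hDcard) _).trans_lt hlt
  have := ENNReal.toReal_mono (by finiteness) hlog.le
  rw [ENNReal.toReal_ofReal (Real.log_natCast_nonneg _), ENNReal.toReal_mul,
    ENNReal.toReal_add hfin ENNReal.ofReal_ne_top, ENNReal.toReal_ofReal hκ.le,
    ENNReal.toReal_natCast] at this
  rwa [div_le_iff₀ hm]

theorem soficEpsEntropy_four_mul_le (S : SoficApprox Γ) {t κ : ℝ} (ht : 0 < t) (hκ : 0 < κ)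
    (hκ1 : κ ≤ 1) :
    soficEpsEntropy Γ X S dist (4 * t) ≤
      (Real.log (4 / κ) * ((naiveEpsEntropy Γ X dist t).toReal + κ) +
        κ * ((enatLog (sepNum X dist t)).toReal + Real.log (1 / κ) + 2) : ℝ) := by
  obtain ⟨E, hE, DE, hDE, hDElog⟩ := exists_finset_log_card_div_le (Γ := Γ) (X := X) ht hκ
  obtain ⟨D0, hD0, hD0log⟩ := exists_finset_log_card_le (X := X) ht
  rw [← mul_div_cancel_left₀ t (four_ne_zero' ℝ)] at hDE hD0
  refine (soficEpsEntropy_le_of_nets S hE (by positivity) hκ hκ1 hDE hD0).trans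
    (EReal.coe_le_coe_iff.2 ?_)
  have hlogD0 : Real.log (#D0 / κ) ≤ (enatLog (sepNum X dist t)).toReal + Real.log (1 / κ) := by
    rcases D0.eq_empty_or_nonempty with rfl | hD0ne
    · simpa using add_nonneg ENNReal.toReal_nonneg (Real.log_nonneg ((one_le_div hκ).2 hκ1))
    · rw [div_eq_mul_one_div (#D0 : ℝ), Real.log_mul (by simp [hD0ne.ne_empty]) (by positivity)]
      gcongr
  have hlog4 : 0 ≤ Real.log (4 / κ) := Real.log_nonneg ((one_le_div hκ).2 (by linarith))
  gcongr

end NaiveEntropy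

section SoficMeanDimension

open Topology

variable {Γ X : Type*} [Group Γ] [MulAction Γ X] [PseudoMetricSpace X] [CompactSpace X]
  [ContinuousConstSMul Γ X]

theorem soficEpsEntropy_four_mul_mul_inv_le (S : SoficApprox Γ) {c θ t : ℝ} (hc : 0 < c)
    (hc1 : c ≤ 1) (hθ : 0 ≤ θ) (hθ₁ : 2 * θ * Real.log (16 / c) ≤ c / 4)
    (hθ₂ : 4 * θ ^ 2 ≤ c / 4) (ht : 0 < t) (ht' : t ≤ Real.exp (-(24 / c + 3)))
    (hprod : naiveEpsEntropy Γ X dist t / ENNReal.ofReal |Real.log t| *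
      (enatLog (sepNum X dist t) / ENNReal.ofReal |Real.log t|) < ENNReal.ofReal (θ ^ 2)) :
    soficEpsEntropy Γ X S dist (4 * t) * (((|Real.log (4 * t)|)⁻¹ : ℝ) : EReal) ≤ c := by
  obtain ⟨hLc, hLLt, hLt⟩ := le_abs_log_four_mul_of_le_exp hc hc1 ht ht'
  set L := |Real.log (4 * t)|
  have hL0 : 0 < L := lt_of_lt_of_le (by positivity) hLc
  set h := (naiveEpsEntropy Γ X dist t).toReal
  set M := (enatLog (sepNum X dist t)).toReal
  have hhM : h ≤ M := ENNReal.toReal_mono (enatLog_sepNum_ne_top ht)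
    (naiveEpsEntropy_le_enatLog_sepNum t)
  have hprod' : h * M ≤ (2 * θ * L) ^ 2 := by
    refine (toReal_mul_toReal_le_of_div_mul_div_lt (hL0.trans_le hLLt) hprod).trans ?_
    calc θ ^ 2 * |Real.log t| ^ 2 ≤ θ ^ 2 * (2 * L) ^ 2 := by gcongr
      _ = (2 * θ * L) ^ 2 := by ring
  set κ := c * L / (4 * (M + L)) with hκ
  have hM0 : 0 ≤ M := ENNReal.toReal_nonneg
  have hκ0 : 0 < κ := by positivity
  have hκ1 : κ ≤ 1 := by
    rw [hκ, div_le_one (by positivity)]; nlinarith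
  have hbound := entropy_bound_le hc hc1 hLc ENNReal.toReal_nonneg hhM hprod' hθ hθ₁ hθ₂ hκ
  calc soficEpsEntropy Γ X S dist (4 * t) * ((L⁻¹ : ℝ) : EReal)
      ≤ ((c * L : ℝ) : EReal) * ((L⁻¹ : ℝ) : EReal) := by
        gcongr
        exact (soficEpsEntropy_four_mul_le S ht hκ0 hκ1).trans (EReal.coe_le_coe_iff.2 hbound)
    _ = c := by rw [← EReal.coe_mul, mul_inv_cancel_right₀ hL0.ne']

theorem mdimMSofic_le_of_liminf_eq_zero (S : SoficApprox Γ)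
    (hdecay : Filter.liminf (fun ε : ℝ =>
        (naiveEpsEntropy Γ X dist ε / ENNReal.ofReal |Real.log ε|) *
          (enatLog (sepNum X dist ε) / ENNReal.ofReal |Real.log ε|))
      (nhdsWithin 0 (Set.Ioi 0)) = 0) {c : ℝ} (hc : 0 < c) (hc1 : c ≤ 1) :
    mdimMSofic Γ X S dist ≤ c := by
  set θ := c / (8 * (Real.log (16 / c) + 2))
  have hlog16 : 0 ≤ Real.log (16 / c) := Real.log_nonneg ((one_le_div hc).2 (by linarith))
  have hθ : 0 ≤ θ := by positivity
  have hθc : θ ≤ c / 16 := div_le_div_of_nonneg_left hc.le (by norm_num) (by linarith)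
  have hθ₁ : 2 * θ * Real.log (16 / c) ≤ c / 4 := by
    have hθc' : θ * (8 * (Real.log (16 / c) + 2)) = c :=
      div_mul_cancel₀ c (by positivity)
    nlinarith
  have hθ₂ : 4 * θ ^ 2 ≤ c / 4 := by nlinarith
  have hfreq : ∃ᶠ t in 𝓝[>] (0 : ℝ), naiveEpsEntropy Γ X dist t / ENNReal.ofReal |Real.log t| *
      (enatLog (sepNum X dist t) / ENNReal.ofReal |Real.log t|) < ENNReal.ofReal (θ ^ 2) :=
    frequently_lt_of_liminf_lt (by isBoundedDefault) (hdecay ▸ ENNReal.ofReal_pos.2 (by positivity))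
  have hsmall : ∀ᶠ t in 𝓝[>] (0 : ℝ), 0 < t ∧ t ≤ Real.exp (-(24 / c + 3)) :=
    eventually_mem_nhdsWithin.and
      ((eventually_le_nhds (Real.exp_pos _)).filter_mono nhdsWithin_le_nhds)
  refine liminf_le_of_frequently_le' ((tendsto_iff_comap.2
    (comap_mulLeft_nhdsGT_zero four_pos).ge).frequently ((hfreq.and_eventually hsmall).mono ?_))
  rintro t ⟨hprod, ht, ht'⟩
  exact soficEpsEntropy_four_mul_mul_inv_le S hc hc1 hθ hθ₁ hθ₂ ht ht' hprod

end SoficMeanDimension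

theorem sofic_mm_dim_nonpos_of_decaying_general
    (Γ X : Type*) [Group Γ]
    [TopologicalSpace X] [CompactSpace X]
    [MulAction Γ X] [ContinuousConstSMul Γ X]
    (S : SoficApprox Γ) (ρ : X → X → ℝ) (hρ : IsCompatibleMetric X ρ)
    (hdecay : Filter.liminf (fun ε : ℝ =>
        (naiveEpsEntropy Γ X ρ ε / ENNReal.ofReal |Real.log ε|) *
          (enatLog (sepNum X ρ ε) / ENNReal.ofReal |Real.log ε|))
      (nhdsWithin 0 (Set.Ioi 0)) = 0) :
    mdimMSofic Γ X S ρ ≤ 0 := by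
  -- Give `X` the metric structure `m` of `ρ`; its topology is the given one and `ρ = dist`.
  obtain ⟨m, rfl, hdist⟩ := hρ
  obtain rfl : (@dist X m.toDist) = ρ := funext₂ hdist
  refine EReal.le_of_forall_lt_iff_le.1 fun c hc0 => ?_
  have hc : 0 < c := by exact_mod_cast hc0
  exact (mdimMSofic_le_of_liminf_eq_zero S hdecay (lt_min hc one_pos) (min_le_right c 1)).trans
    (EReal.coe_le_coe_iff.2 (min_le_left c 1))

/-- **Theorem (Liang–Yan, Theorem 5.3).** Suppose the naive metric mean dimension
vanishes and the naive `ε`-entropy decays fast enough; then the sofic metric mean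
dimension is nonpositive. -/
theorem sofic_mm_dim_nonpos_of_decaying
    (Γ X : Type*) [Group Γ] [Countable Γ]
    [TopologicalSpace X] [CompactSpace X] [TopologicalSpace.MetrizableSpace X]
    [MulAction Γ X] [ContinuousConstSMul Γ X]
    (S : SoficApprox Γ) (ρ : X → X → ℝ) (hρ : IsCompatibleMetric X ρ)
    (h0 : mdimMNaive Γ X ρ = 0)
    (hdecay : Filter.liminf (fun ε : ℝ =>
        (naiveEpsEntropy Γ X ρ ε / ENNReal.ofReal |Real.log ε|) *
          (enatLog (sepNum X ρ ε) / ENNReal.ofReal |Real.log ε|))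
      (nhdsWithin 0 (Set.Ioi 0)) = 0) :
    mdimMSofic Γ X S ρ ≤ 0 :=
  sofic_mm_dim_nonpos_of_decaying_general Γ X S ρ hρ hdecay
end
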